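/- arXiv:2212.09348 — 3 statements merged into one kernel-verified Lean document; each statement's English description precedes it below -/
import Mathlib

section
/- Let n ≥ 2 and let A = (a_{i,j}) be an n×n matrix with entries in {0,1} such that row n has exactly two nonzero entries, located in columns n−1 and n. Let Y = {σ ∈ S_n : a_{i,σ(i)} = 1 for all i}, and let Y₃ be the set of all σ ∈ Y such that, writing c = σ(n) ∈ {n−1,n} and c′ for the other element of {n−1,n}, the row r = σ⁻¹(c′) satisfies a_{r,c} = 1. Then |Y₃| is even. -/
open SimpleGraph

namespace PaperMM

/-- A (finite, simple) graph bundled with its vertex type. -/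
structure Graph : Type 1 where
  V : Type
  adj : SimpleGraph V

/-- `G` has a perfect matching. -/
def HasPM {V : Type} (G : SimpleGraph V) : Prop :=
  ∃ M : G.Subgraph, M.IsPerfectMatching

/-- `X ⊆ V(G)` is conformal: `G − X` has a perfect matching. -/
def ConformalSet {V : Type} (G : SimpleGraph V) (X : Set V) : Prop :=
  HasPM (G.induce Xᶜ)

/-- The result of bicontracting the degree-2 vertex `v` with neighbours `u₀, u₁`:
the three vertices are identified into (the vertex previously called) `v`,
loops and parallel edges being suppressed. -/
def bicontractAt {V : Type} (G : SimpleGraph V) (v u₀ u₁ : V) :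
    SimpleGraph {x : V // x ≠ u₀ ∧ x ≠ u₁} where
  Adj a b :=
    (a.1 ≠ v ∧ b.1 ≠ v ∧ G.Adj a.1 b.1) ∨
    (a.1 = v ∧ b.1 ≠ v ∧ (G.Adj b.1 u₀ ∨ G.Adj b.1 u₁)) ∨
    (b.1 = v ∧ a.1 ≠ v ∧ (G.Adj a.1 u₀ ∨ G.Adj a.1 u₁))
  symm := by
    constructor
    rintro a b (⟨h1, h2, h3⟩ | ⟨h1, h2, h3⟩ | ⟨h1, h2, h3⟩)
    · exact Or.inl ⟨h2, h1, h3.symm⟩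
    · exact Or.inr (Or.inr ⟨h1, h2, h3⟩)
    · exact Or.inr (Or.inl ⟨h1, h2, h3⟩)
  loopless := by
    constructor
    rintro a (⟨h1, _h2, h3⟩ | ⟨h1, h2, _h3⟩ | ⟨h1, h2, _h3⟩)
    · exact G.loopless.irrefl _ h3
    · exact h2 h1
    · exact h2 h1

/-- `H` is obtained from `G` by a single bicontraction of a vertex of degree two. -/
def Bicontract (G H : Graph) : Prop :=
  ∃ v u₀ u₁ : G.V, u₀ ≠ u₁ ∧ G.adj.neighborSet v = {u₀, u₁} ∧
    Nonempty (H.adj ≃g bicontractAt G.adj v u₀ u₁)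

/-- `H` is a matching minor of `G`: a graph isomorphic to `H` can be obtained from
a conformal subgraph of `G` by repeated bicontractions. -/
def IsMatchingMinor (H G : Graph) : Prop :=
  ∃ (H' : G.adj.Subgraph) (K : Graph),
    ConformalSet G.adj H'.verts ∧
    Relation.ReflTransGen Bicontract ⟨↥H'.verts, H'.coe⟩ K ∧
    Nonempty (H.adj ≃g K.adj)

/-- The edge cut `∂(X)`: all edges of `G` with exactly one endpoint in `X`. -/
def edgeCut {V : Type} (G : SimpleGraph V) (X : Set V) : Set (Sym2 V) :=
  {e | e ∈ G.edgeSet ∧ ∃ a b : V, e = s(a, b) ∧ a ∈ X ∧ b ∉ X}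

/-- `∂(X)` is a tight cut: every perfect matching contains exactly one of its edges. -/
def IsTightCut {V : Type} (G : SimpleGraph V) (X : Set V) : Prop :=
  ∀ M : G.Subgraph, M.IsPerfectMatching → (M.edgeSet ∩ edgeCut G X).ncard = 1

/-- `G` is matching covered: connected and every edge lies in a perfect matching. -/
def MatchingCovered {V : Type} (G : SimpleGraph V) : Prop :=
  G.Connected ∧ ∀ e ∈ G.edgeSet, ∃ M : G.Subgraph, M.IsPerfectMatching ∧ e ∈ M.edgeSet

/-- `(V₁, V₂)` is a bipartition of `G` into two independent sets. -/
def IsBipartition {V : Type} (G : SimpleGraph V) (V₁ V₂ : Set V) : Prop :=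
  V₁ ∪ V₂ = Set.univ ∧ V₁ ∩ V₂ = ∅ ∧
    ∀ a b : V, G.Adj a b → ((a ∈ V₁ ∧ b ∈ V₂) ∨ (a ∈ V₂ ∧ b ∈ V₁))

def IsBipartiteGraph {V : Type} (G : SimpleGraph V) : Prop :=
  ∃ V₁ V₂ : Set V, IsBipartition G V₁ V₂

/-- A brace: a bipartite matching covered graph with no non-trivial tight cut. -/
def IsBrace {V : Type} (G : SimpleGraph V) : Prop :=
  IsBipartiteGraph G ∧ MatchingCovered G ∧
    ¬ ∃ X : Set V, IsTightCut G X ∧ 2 ≤ X.ncard ∧ 2 ≤ Xᶜ.ncard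

/-- A perfect matching decomposition: a cubic tree `tree` together with a bijection
from its leaves to the vertices of `G`. -/
structure PMDecomp {V : Type} (G : SimpleGraph V) where
  T : Type
  tree : SimpleGraph T
  isTree : tree.IsTree
  cubic : ∀ t : T, (tree.neighborSet t).ncard = 1 ∨ (tree.neighborSet t).ncard = 3
  leafEquiv : {t : T // (tree.neighborSet t).ncard = 1} ≃ V

/-- The side of the partition of `V(G)` induced by the tree edge `{t₁, t₂}`
corresponding to `t₁`. -/
def PMDecomp.sideSet {V : Type} {G : SimpleGraph V} (D : PMDecomp G) (t₁ t₂ : D.T) :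
    Set V :=
  {v | (D.tree.deleteEdges {s(t₁, t₂)}).Reachable t₁ (D.leafEquiv.symm v).1}

/-- The matching porosity of `X`: the maximum number of edges of `∂(X)` in a
perfect matching of `G`. -/
noncomputable def matchingPorosity {V : Type} (G : SimpleGraph V) (X : Set V) : ℕ :=
  sSup {n | ∃ M : G.Subgraph, M.IsPerfectMatching ∧ n = (M.edgeSet ∩ edgeCut G X).ncard}

/-- The width of a perfect matching decomposition. -/
noncomputable def PMDecomp.width {V : Type} {G : SimpleGraph V} (D : PMDecomp G) : ℕ :=
  sSup {n | ∃ t₁ t₂ : D.T, D.tree.Adj t₁ t₂ ∧ n = matchingPorosity G (D.sideSet t₁ t₂)}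

/-- The perfect matching width of `G`. -/
noncomputable def pmw {V : Type} (G : SimpleGraph V) : ℕ :=
  sInf {w | ∃ D : PMDecomp G, D.width ≤ w}

/-! ### Concrete graphs -/

/-- The `(n × m)`-grid. -/
def gridGraph (n m : ℕ) : SimpleGraph (Fin n × Fin m) :=
  SimpleGraph.fromRel (fun p q =>
    (p.1 = q.1 ∧ p.2.1 + 1 = q.2.1) ∨ (p.2 = q.2 ∧ p.1.1 + 1 = q.1.1))

/-- The single-crossing matching grid of order `k`: the `(2k × 2k)`-grid whose
central 4-cycle (`(k,k),(k,k+1),(k+1,k+1),(k+1,k)` in 1-based coordinates) is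
identified with a 4-cycle of `K_{3,3}`; `Sum.inr 0` and `Sum.inr 1` are the two
remaining vertices of `K_{3,3}`. -/
def singleCrossingMatchingGrid (k : ℕ) :
    SimpleGraph ((Fin (2*k) × Fin (2*k)) ⊕ Fin 2) :=
  SimpleGraph.fromRel (fun x y =>
    (∃ p q : Fin (2*k) × Fin (2*k), x = Sum.inl p ∧ y = Sum.inl q ∧
      ((p.1 = q.1 ∧ p.2.1 + 1 = q.2.1) ∨ (p.2 = q.2 ∧ p.1.1 + 1 = q.1.1))) ∨
    (∃ p : Fin (2*k) × Fin (2*k), x = Sum.inl p ∧ y = Sum.inr 0 ∧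
      ((p.1.1 = k - 1 ∧ p.2.1 = k) ∨ (p.1.1 = k ∧ p.2.1 = k - 1))) ∨
    (∃ p : Fin (2*k) × Fin (2*k), x = Sum.inl p ∧ y = Sum.inr 1 ∧
      ((p.1.1 = k - 1 ∧ p.2.1 = k - 1) ∨ (p.1.1 = k ∧ p.2.1 = k))) ∨
    (x = Sum.inr 0 ∧ y = Sum.inr 1))

/-- The inside-out single-crossing matching grid of order `k`: the `(2k × 2k)`-grid
together with the two remaining vertices of a `K_{3,3}` whose chosen 4-cycle has been
identified with the four corners (its edges being deleted). -/
def insideOutSingleCrossingMatchingGrid (k : ℕ) :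
    SimpleGraph ((Fin (2*k) × Fin (2*k)) ⊕ Fin 2) :=
  SimpleGraph.fromRel (fun x y =>
    (∃ p q : Fin (2*k) × Fin (2*k), x = Sum.inl p ∧ y = Sum.inl q ∧
      ((p.1 = q.1 ∧ p.2.1 + 1 = q.2.1) ∨ (p.2 = q.2 ∧ p.1.1 + 1 = q.1.1))) ∨
    (∃ p : Fin (2*k) × Fin (2*k), x = Sum.inl p ∧ y = Sum.inr 0 ∧
      ((p.1.1 = 0 ∧ p.2.1 = 2*k - 1) ∨ (p.1.1 = 2*k - 1 ∧ p.2.1 = 0))) ∨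
    (∃ p : Fin (2*k) × Fin (2*k), x = Sum.inl p ∧ y = Sum.inr 1 ∧
      ((p.1.1 = 0 ∧ p.2.1 = 0) ∨ (p.1.1 = 2*k - 1 ∧ p.2.1 = 2*k - 1))) ∨
    (x = Sum.inr 0 ∧ y = Sum.inr 1))

/-- The cylindrical matching grid `CG_k` of order `k` (0-based coordinates:
vertex `(i, j)` is `v_{j+1}^{i+1}` of the paper). -/
def cylindricalMatchingGrid (k : ℕ) : SimpleGraph (Fin k × Fin (4*k)) :=
  SimpleGraph.fromRel (fun x y =>
    (x.1 = y.1 ∧ (x.2.1 + 1) % (4*k) = y.2.1) ∨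
    (x.1.1 + 1 = y.1.1 ∧ x.2.1 % 4 = 0 ∧ x.2.1 + 1 = y.2.1) ∨
    (y.1.1 + 1 = x.1.1 ∧ x.2.1 % 4 = 2 ∧ x.2.1 + 1 = y.2.1))

/-- The edges of the canonical matching of `CG_k`. -/
def cmgCanonicalEdges (k : ℕ) : Set (Sym2 (Fin k × Fin (4*k))) :=
  {e | ∃ x y : Fin k × Fin (4*k), e = s(x, y) ∧ x.1 = y.1 ∧
        x.2.1 % 2 = 0 ∧ x.2.1 + 1 = y.2.1}

/-- The edges of the alternating matching of `CG_k` (for `k` even): the canonical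
matching with `M ∩ E(C_i)` replaced by `E(C_i) ∖ M` on every odd (1-based) cycle. -/
def cmgAlternatingEdges (k : ℕ) : Set (Sym2 (Fin k × Fin (4*k))) :=
  {e | ∃ x y : Fin k × Fin (4*k), e = s(x, y) ∧ x.1 = y.1 ∧
        (x.2.1 + 1) % (4*k) = y.2.1 ∧ (x.1.1 + x.2.1) % 2 = 1}

/-- The cylindrical single-crossing grid of order `h`: `CG_{4h}` plus the two
crossing edges `v^1_1 v^1_{8h+4}` and `v^1_{4h+1} v^1_{12h+4}`. -/
def cylindricalSingleCrossingGrid (h : ℕ) :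
    SimpleGraph (Fin (4*h) × Fin (4*(4*h))) :=
  cylindricalMatchingGrid (4*h) ⊔ SimpleGraph.fromRel (fun x y =>
    x.1.1 = 0 ∧ y.1.1 = 0 ∧
      ((x.2.1 = 0 ∧ y.2.1 = 8*h + 3) ∨ (x.2.1 = 4*h ∧ y.2.1 = 12*h + 3)))

/-- The cylindrical single-jump grid of order `k`: `CG_k` plus the edge `v^k_1 v^1_2`. -/
def cylindricalSingleJumpGrid (k : ℕ) : SimpleGraph (Fin k × Fin (4*k)) :=
  cylindricalMatchingGrid k ⊔ SimpleGraph.fromRel (fun x y =>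
    x.1.1 = k - 1 ∧ x.2.1 = 0 ∧ y.1.1 = 0 ∧ y.2.1 = 1)

/-- The shallow vortex matching grid `SVMG_k` of order `k`. -/
def shallowVortexMatchingGrid (k : ℕ) : SimpleGraph (Fin (2*k) × Fin (8*k)) :=
  SimpleGraph.fromRel (fun x y =>
    (x.1 = y.1 ∧ (x.2.1 + 1) % (8*k) = y.2.1) ∨
    (x.1.1 + 1 = y.1.1 ∧ x.2.1 % 4 = 0 ∧ x.2.1 + 1 = y.2.1) ∨
    (y.1.1 + 1 = x.1.1 ∧ x.2.1 % 4 = 2 ∧ x.2.1 + 1 = y.2.1) ∨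
    (x.1.1 = 0 ∧ y.1.1 = 0 ∧ x.2.1 % 4 = 1 ∧ (x.2.1 + 5) % (8*k) = y.2.1))

/-- The refined vortex `RV_k` of order `k`. -/
def refinedVortex (k : ℕ) : SimpleGraph (Fin (2*k) × Fin (4*k)) :=
  SimpleGraph.fromRel (fun x y =>
    (x.1 = y.1 ∧ (x.2.1 + 1) % (4*k) = y.2.1) ∨
    (x.1.1 + 1 = y.1.1 ∧ x.2 = y.2) ∨
    (x.1.1 = 0 ∧ y.1.1 = 0 ∧ x.2.1 % 4 = 1 ∧ (x.2.1 + 3) % (4*k) = y.2.1))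

/-- The (ordinary) single-crossing grid of order `n`: the `(2n × 2n)`-grid plus the
two crossing edges `{(n,n),(n+1,n+1)}` and `{(n,n+1),(n+1,n)}` (1-based). -/
def singleCrossingGrid (n : ℕ) : SimpleGraph (Fin (2*n) × Fin (2*n)) :=
  gridGraph (2*n) (2*n) ⊔ SimpleGraph.fromRel (fun p q =>
    (p.1.1 = n - 1 ∧ p.2.1 = n - 1 ∧ q.1.1 = n ∧ q.2.1 = n) ∨
    (p.1.1 = n - 1 ∧ p.2.1 = n ∧ q.1.1 = n ∧ q.2.1 = n - 1))

/-! ### M-conformality -/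

/-- `X` is `M`-conformal: every vertex outside `X` is matched by `M` to a vertex
outside `X`, i.e. `M ∩ E(G − X)` is a perfect matching of `G − X`. -/
def MConformalSet {V : Type} {G : SimpleGraph V} (M : G.Subgraph) (X : Set V) : Prop :=
  ∀ v ∈ Xᶜ, ∃ w ∈ Xᶜ, M.Adj v w

/-- A walk is internally `M`-conformal: it alternates between edges outside `M`
and edges of `M`, starting and ending with edges not in `M`. -/
def InternallyMConformal {V : Type} {G : SimpleGraph V} (M : G.Subgraph)
    {a b : V} (P : G.Walk a b) : Prop :=
  ∀ (i : ℕ) (h : i < P.edges.length), (P.edges.get ⟨i, h⟩ ∈ M.edgeSet ↔ i % 2 = 1)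

/-! ### Subdivisions -/

/-- A model of a subdivision of `H` inside `B`: branch vertices together with
internally disjoint paths representing the edges of `H`. -/
structure SubdivisionModel {V U : Type} (B : SimpleGraph V) (H : SimpleGraph U) where
  branch : U → V
  branch_inj : Function.Injective branch
  path : ∀ ⦃u w : U⦄, H.Adj u w → B.Walk (branch u) (branch w)
  path_isPath : ∀ ⦃u w : U⦄ (h : H.Adj u w), (path h).IsPath
  path_symm : ∀ ⦃u w : U⦄ (h : H.Adj u w), path h.symm = (path h).reverse
  branch_meet : ∀ ⦃u w : U⦄ (h : H.Adj u w) (z : U),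
      branch z ∈ (path h).support → z = u ∨ z = w
  path_disjoint : ∀ ⦃u w u' w' : U⦄ (h : H.Adj u w) (h' : H.Adj u' w'),
      s(u, w) ≠ s(u', w') → ∀ x : V, x ∈ (path h).support → x ∈ (path h').support →
        (x = branch u ∨ x = branch w) ∧ (x = branch u' ∨ x = branch w')

/-- The vertices of the subdivision in the host graph. -/
def SubdivisionModel.verts {V U : Type} {B : SimpleGraph V} {H : SimpleGraph U}
    (S : SubdivisionModel B H) : Set V :=
  {x | ∃ u w : U, ∃ h : H.Adj u w, x ∈ (S.path h).support}

/-- The edges of the subdivision in the host graph. -/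
def SubdivisionModel.edges' {V U : Type} {B : SimpleGraph V} {H : SimpleGraph U}
    (S : SubdivisionModel B H) : Set (Sym2 V) :=
  {e | ∃ u w : U, ∃ h : H.Adj u w, e ∈ (S.path h).edges}

/-- A model of a bisubdivision: every edge of `H` is replaced by a path of odd
length (i.e. every edge is subdivided an even number of times). -/
structure BisubdivisionModel {V U : Type} (B : SimpleGraph V) (H : SimpleGraph U)
    extends SubdivisionModel B H where
  path_odd : ∀ ⦃u w : U⦄ (h : H.Adj u w), Odd (path h).length

/-- `M` contains the canonical matching of the (bi)subdivision `S` of `CG_N`: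
`M ∩ E(W)` is a perfect matching of `W` in which every branch vertex is matched
along the subdivided image of the canonical-matching edge at the corresponding
grid vertex. -/
def ContainsCanonical {V : Type} {B : SimpleGraph V} {N : ℕ}
    (S : SubdivisionModel B (cylindricalMatchingGrid N)) (M : B.Subgraph) : Prop :=
  (∀ x ∈ S.verts, ∃ y ∈ S.verts, M.Adj x y ∧ s(x, y) ∈ S.edges') ∧
  (∀ (u : Fin N × Fin (4*N)) (y : V), M.Adj (S.branch u) y →
    ∃ w : Fin N × Fin (4*N), ∃ h : (cylindricalMatchingGrid N).Adj u w,
      s(u, w) ∈ cmgCanonicalEdges N ∧ s(S.branch u, y) ∈ (S.path h).edges)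

/-- The vertex set, in the host graph, of the subdivided image of the `j`-th
(0-based) concentric cycle of `CG_N`. -/
def cycVerts {V : Type} {B : SimpleGraph V} {N : ℕ}
    (S : SubdivisionModel B (cylindricalMatchingGrid N)) (j : ℕ) : Set V :=
  {x | ∃ u w : Fin N × Fin (4*N), ∃ h : (cylindricalMatchingGrid N).Adj u w,
      u.1.1 = j ∧ w.1.1 = j ∧ x ∈ (S.path h).support}

/-! ### Separations, minors, connectivity -/

/-- `(A, B)` is a separation of `G`. -/
def IsSeparation {V : Type} (G : SimpleGraph V) (A B : Set V) : Prop :=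
  A ∪ B = Set.univ ∧ ∀ a b : V, G.Adj a b → a ∈ A \ B → b ∉ B \ A

/-- `H` is a minor of `G` (branch-set model). -/
def IsMinor {U V : Type} (H : SimpleGraph U) (G : SimpleGraph V) : Prop :=
  ∃ φ : U → Set V,
    (∀ u, (φ u).Nonempty) ∧
    (∀ u, ∀ x, ∀ hx : x ∈ φ u, ∀ y, ∀ hy : y ∈ φ u,
      (G.induce (φ u)).Reachable ⟨x, hx⟩ ⟨y, hy⟩) ∧
    (Pairwise fun u w => Disjoint (φ u) (φ w)) ∧
    (∀ u w : U, H.Adj u w → ∃ x ∈ φ u, ∃ y ∈ φ w, G.Adj x y)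

/-- `G` is quasi-4-connected: 3-connected and every separation of order 3 has a
side containing at most one extra vertex. -/
def QuasiFourConnected {V : Type} (G : SimpleGraph V) : Prop :=
  (4 ≤ Nat.card V ∧
    ∀ A B : Set V, IsSeparation G A B → (A ∩ B).ncard ≤ 2 → A ⊆ B ∨ B ⊆ A) ∧
  (∀ A B : Set V, IsSeparation G A B → (A ∩ B).ncard = 3 →
    (A \ B).ncard ≤ 1 ∨ (B \ A).ncard ≤ 1)

/-! ### Walls -/

/-- The `(2n × n)`-grid with every odd edge of every odd column and every even edge
of every even column deleted (1-based parities). -/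
def preWall (n : ℕ) : SimpleGraph (Fin (2*n) × Fin n) :=
  SimpleGraph.fromRel (fun p q =>
    (p.1 = q.1 ∧ p.2.1 + 1 = q.2.1) ∨
    (p.2 = q.2 ∧ p.1.1 + 1 = q.1.1 ∧ ¬ p.1.1 % 2 = p.2.1 % 2))

/-- The vertices of the elementary `n`-wall: all vertices of `preWall n` of degree
at least two. -/
def elementaryWallVerts (n : ℕ) : Set (Fin (2*n) × Fin n) :=
  {v | 2 ≤ ((preWall n).neighborSet v).ncard}

/-- The elementary `n`-wall. -/
def elementaryWall (n : ℕ) : SimpleGraph ↥(elementaryWallVerts n) :=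
  (preWall n).induce (elementaryWallVerts n)

/-- The vertices on the perimeter of the elementary `n`-wall. -/
def wallPerimSet (n : ℕ) : Set (Fin (2*n) × Fin n) :=
  {v | v.1.1 = 0 ∨ v.1.1 = 2*n - 1 ∨ v.2.1 = 0 ∨ v.2.1 = n - 1}

/-- The (1-based) index of the concentric cycle of the centred layering of the
elementary `n`-wall containing a given vertex. -/
def wallRingIdx (n : ℕ) (v : Fin (2*n) × Fin n) : ℕ :=
  max ((if v.1.1 < n then n - 1 - v.1.1 else v.1.1 - n) / 2)
      (if v.2.1 < n / 2 then n / 2 - 1 - v.2.1 else v.2.1 - n / 2) + 1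

/-- The vertex set, in the host graph, of the `r`-th concentric cycle of a wall
given by a subdivision model. -/
def wallRingVertsG {V : Type} {G : SimpleGraph V} {n : ℕ}
    (S : SubdivisionModel G (elementaryWall n)) (r : ℕ) : Set V :=
  {x | ∃ u w, ∃ h : (elementaryWall n).Adj u w,
      wallRingIdx n u.1 = r ∧ wallRingIdx n w.1 = r ∧ x ∈ (S.path h).support}

/-- The vertex set, in the host graph, of the union of the first `r` concentric
cycles of a wall given by a subdivision model. -/
def wallInnerVertsG {V : Type} {G : SimpleGraph V} {n : ℕ}
    (S : SubdivisionModel G (elementaryWall n)) (r : ℕ) : Set V :=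
  {x | ∃ u w, ∃ h : (elementaryWall n).Adj u w,
      wallRingIdx n u.1 = wallRingIdx n w.1 ∧ wallRingIdx n u.1 ≤ r ∧
      x ∈ (S.path h).support}

/-- The vertex set, in the host graph, of the perimeter of a wall given by a
subdivision model. -/
def wallPerimVertsG {V : Type} {G : SimpleGraph V} {n : ℕ}
    (S : SubdivisionModel G (elementaryWall n)) : Set V :=
  {x | ∃ u w, ∃ h : (elementaryWall n).Adj u w,
      u.1 ∈ wallPerimSet n ∧ w.1 ∈ wallPerimSet n ∧ x ∈ (S.path h).support}

/-- The (1-based) index of the concentric cycle of the centred layering of the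
`(n × n)`-grid (`n` even) containing a given vertex. -/
def gridRing (n : ℕ) (p : Fin n × Fin n) : ℕ :=
  max (if p.1.1 < n / 2 then n / 2 - 1 - p.1.1 else p.1.1 - n / 2)
      (if p.2.1 < n / 2 then n / 2 - 1 - p.2.1 else p.2.1 - n / 2) + 1

/-! ### Matrices and permanents -/

/-- The permanent of an `n × n` matrix of naturals. -/
def perm (n : ℕ) (A : Matrix (Fin n) (Fin n) ℕ) : ℕ :=
  ∑ σ : Equiv.Perm (Fin n), ∏ i : Fin n, A i (σ i)

/-- The bipartite graph `B(A)` associated with a 0/1 matrix `A`: two copies of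
`{1,…,n}`, with `uᵢ` adjacent to `wⱼ` iff `A i j = 1`. -/
def matrixGraph (n : ℕ) (A : Matrix (Fin n) (Fin n) ℕ) :
    SimpleGraph (Fin n ⊕ Fin n) :=
  SimpleGraph.fromRel (fun x y => ∃ i j : Fin n, x = Sum.inl i ∧ y = Sum.inr j ∧ A i j = 1)

/-- The last index of `Fin n` (row/column `n`). -/
def lastIdx (n : ℕ) (_hn : 2 ≤ n) : Fin n := ⟨n - 1, by omega⟩

/-- The second-to-last index of `Fin n` (row/column `n − 1`). -/
def sndIdx (n : ℕ) (_hn : 2 ≤ n) : Fin n := ⟨n - 2, by omega⟩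

/-- The bicontraction of `A` at its last row: replace column `n−1` by the entrywise
maximum of columns `n−1` and `n`, then delete row `n` and column `n`. -/
def bicontractMatrix (n : ℕ) (hn : 2 ≤ n) (A : Matrix (Fin n) (Fin n) ℕ) :
    Matrix (Fin (n-1)) (Fin (n-1)) ℕ :=
  fun j i =>
    if (i : ℕ) = n - 2 then
      max (A (Fin.castLE (Nat.sub_le n 1) j) (sndIdx n hn))
          (A (Fin.castLE (Nat.sub_le n 1) j) (lastIdx n hn))
    else A (Fin.castLE (Nat.sub_le n 1) j) (Fin.castLE (Nat.sub_le n 1) i)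

end PaperMM

/-! Left multiplication by the transposition of the two columns `n − 1, n` is a fixed-point-free
involution of `Y₃`. If `σ(n) = c` and `r = σ⁻¹(c')`, it reroutes row `n` to `c'` and row `r`
to `c`, which `a_{n,c'} = a_{r,c} = 1` allows; the result lies in `Y₃` with `c, c'` exchanged
because `a_{r,c'} = 1`. -/

open Equiv

theorem Set.even_ncard_of_involutive {α : Type*} {f : α → α} (hf : Function.Involutive f)
    {s : Set α} (hs : Set.MapsTo f s s) (hfix : ∀ a ∈ s, f a ≠ a) : Even s.ncard := by
  classical
  rcases s.finite_or_infinite with hfin | hinf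
  · have : Fintype s := hfin.fintype
    let e : Perm s := Function.Involutive.toPerm (hs.restrict f s s) fun a ↦ Subtype.ext (hf a)
    have he : e.support = Finset.univ := Finset.eq_univ_of_forall fun a ↦
      Perm.mem_support.2 fun h ↦ hfix a a.2 (congrArg Subtype.val h)
    have he2 : e ^ 2 = 1 := by
      ext a
      exact hf a
    rw [← Nat.card_coe_set_eq, Nat.card_eq_fintype_card, ← Finset.card_univ, ← he, even_iff_two_dvd]
    exact Perm.two_dvd_card_support he2
  · rw [hinf.ncard]
    exact Even.zero

namespace PaperMM

variable {ι R : Type*} [One R]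

/-- `Y₃` of the paper, for the row `ℓ = n` and the columns `c = n − 1`, `c' = n`. -/
def Y₃ (A : Matrix ι ι R) (ℓ c c' : ι) : Set (Perm ι) :=
  {σ | (∀ i, A i (σ i) = 1) ∧
    ((σ ℓ = c ∧ A (σ⁻¹ c') c = 1) ∨ (σ ℓ = c' ∧ A (σ⁻¹ c) c' = 1))}

theorem Y₃_comm (A : Matrix ι ι R) (ℓ c c' : ι) : Y₃ A ℓ c c' = Y₃ A ℓ c' c := by
  ext σ
  simp only [Y₃, or_comm]

variable [DecidableEq ι]

theorem swap_mul_mem_Y₃_of_apply_eq {A : Matrix ι ι R} {σ : Perm ι} {ℓ c c' : ι}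
    (hσ : ∀ i, A i (σ i) = 1) (hσℓ : σ ℓ = c) (hr : A (σ⁻¹ c') c = 1) (hℓc' : A ℓ c' = 1) :
    swap c c' * σ ∈ Y₃ A ℓ c c' := by
  have hσr : σ (σ⁻¹ c') = c' := σ.apply_symm_apply c'
  refine ⟨fun i ↦ ?_, Or.inr ⟨by simp [hσℓ], ?_⟩⟩
  · rw [Perm.mul_apply]
    by_cases hic : σ i = c
    · obtain rfl : i = ℓ := σ.injective (hic.trans hσℓ.symm)
      rwa [hic, swap_apply_left]
    by_cases hic' : σ i = c'
    · obtain rfl : i = σ⁻¹ c' := σ.injective (hic'.trans hσr.symm)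
      rwa [hic', swap_apply_right]
    rw [swap_apply_of_ne_of_ne hic hic']
    exact hσ i
  · have hrc' := hσ (σ⁻¹ c')
    rw [hσr] at hrc'
    simpa using hrc'

theorem swap_mul_mem_Y₃ {A : Matrix ι ι R} {ℓ c c' : ι} (hc : A ℓ c = 1) (hc' : A ℓ c' = 1)
    {σ : Perm ι} (hσ : σ ∈ Y₃ A ℓ c c') : swap c c' * σ ∈ Y₃ A ℓ c c' := by
  obtain ⟨hσ, ⟨hσℓ, hr⟩ | ⟨hσℓ, hr⟩⟩ := hσ
  · exact swap_mul_mem_Y₃_of_apply_eq hσ hσℓ hr hc'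
  · rw [Y₃_comm, swap_comm]
    exact swap_mul_mem_Y₃_of_apply_eq hσ hσℓ hr hc

theorem even_ncard_Y₃ {A : Matrix ι ι R} {ℓ c c' : ι} (hcc' : c ≠ c') (hc : A ℓ c = 1)
    (hc' : A ℓ c' = 1) : Even (Y₃ A ℓ c c').ncard :=
  Set.even_ncard_of_involutive (swap_mul_involutive c c') (fun _ ↦ swap_mul_mem_Y₃ hc hc')
    fun _ _ h ↦ hcc' (swap_eq_one_iff.1 (mul_eq_right.1 h))

/-- If row `n` of the 0/1 matrix `A` has exactly two nonzero entries,
in columns `n−1` and `n`, then the set `Y₃` of permutations `σ` contributing to the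
permanent for which, with `c = σ(n)` and `c′` the other of the two columns and
`r = σ⁻¹(c′)`, one has `a_{r,c} = 1`, has even cardinality. -/
theorem statement2 (n : ℕ) (hn : 2 ≤ n) (A : Matrix (Fin n) (Fin n) ℕ)
    (h01 : ∀ i j, A i j = 0 ∨ A i j = 1)
    (hrow : ∀ j : Fin n, A (lastIdx n hn) j ≠ 0 ↔ (j = sndIdx n hn ∨ j = lastIdx n hn)) :
    Even ({σ : Equiv.Perm (Fin n) |
      (∀ i, A i (σ i) = 1) ∧
      ((σ (lastIdx n hn) = sndIdx n hn ∧ A (σ⁻¹ (lastIdx n hn)) (sndIdx n hn) = 1) ∨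
       (σ (lastIdx n hn) = lastIdx n hn ∧ A (σ⁻¹ (sndIdx n hn)) (lastIdx n hn) = 1))}.ncard) := by
  have hne : sndIdx n hn ≠ lastIdx n hn := by
    simp only [sndIdx, lastIdx, ne_eq, Fin.mk.injEq]
    omega
  have hone : ∀ j, j = sndIdx n hn ∨ j = lastIdx n hn → A (lastIdx n hn) j = 1 :=
    fun j hj ↦ (h01 _ j).resolve_left ((hrow j).2 hj)
  exact even_ncard_Y₃ hne (hone _ (Or.inl rfl)) (hone _ (Or.inr rfl))

end PaperMM
end

section
/- Let B be a bipartite matching covered graph with bipartition classes V₁ and V₂, and let X ⊆ V(B) be a set of vertices with |X| ≥ 3 and |V(B) ∖ X| ≥ 3. Then ∂(X) is a tight cut of B if and only if there exists i ∈ {1,2} such that |X ∩ V_i| = |X ∩ V_{3−i}| − 1 and N_B(X ∩ V_i) ⊆ X. -/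
open SimpleGraph

namespace PaperMM

/-! Fix a perfect matching `M` and let `aᵢ` count the vertices of `X ∩ Vᵢ` that `M` matches
outside `X`. The other vertices of `X` are matched inside `X`, across the bipartition, so
`|X ∩ V₁| + a₂ = |X ∩ V₂| + a₁`, while `M` has `a₁ + a₂` edges in `∂(X)`. If `∂(X)` is tight,
one perfect matching fixes which `aᵢ` vanishes and hence the cardinality condition; an edge
from `X ∩ V₁` to the outside would lie in a perfect matching with `a₁ ≥ 1`, contradicting it.
Conversely the neighbourhood condition forces `a₁ = 0`, and then the count gives `a₂ = 1`. -/

section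

variable {V : Type} {G : SimpleGraph V}

def matchedOutside (M : G.Subgraph) (X : Set V) : Set V :=
  {v | v ∈ X ∧ ∃ w ∉ X, M.Adj v w}

theorem ncard_edgeSet_inter_edgeCut {M : G.Subgraph} (hM : M.IsMatching) (X : Set V) :
    (M.edgeSet ∩ edgeCut G X).ncard = (matchedOutside M X).ncard := by
  symm
  refine Set.ncard_congr (fun v hv => s(v, hv.2.choose)) ?_ ?_ ?_
  · rintro v ⟨hv, hw⟩
    obtain ⟨hwX, hvw⟩ := hw.choose_spec
    exact ⟨hvw, M.adj_sub hvw, v, _, rfl, hv, hwX⟩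
  · rintro v v' ⟨hv, hw⟩ ⟨hv', hw'⟩ h
    rcases Sym2.eq_iff.mp h with ⟨rfl, -⟩ | ⟨h, -⟩
    · rfl
    · exact absurd (h ▸ hv) hw'.choose_spec.1
  · rintro e ⟨he, -, a, b, rfl, ha, hb⟩
    have hab : M.Adj a b := he
    have ha' : a ∈ matchedOutside M X := ⟨ha, b, hb, hab⟩
    refine ⟨a, ha', ?_⟩
    rw [hM.eq_of_adj_left ha'.2.choose_spec.2 hab]

theorem IsBipartition.symm {V₁ V₂ : Set V} (h : IsBipartition G V₁ V₂) :
    IsBipartition G V₂ V₁ :=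
  ⟨by rw [Set.union_comm, h.1], by rw [Set.inter_comm, h.2.1],
    fun a b hab => (h.2.2 a b hab).symm⟩

theorem IsBipartition.mem_right_of_adj {V₁ V₂ : Set V} (h : IsBipartition G V₁ V₂) {a b : V}
    (hab : G.Adj a b) (ha : a ∈ V₁) : b ∈ V₂ := by
  rcases h.2.2 a b hab with ⟨-, hb⟩ | ⟨ha₂, -⟩
  · exact hb
  · exact absurd (h.2.1 ▸ ⟨ha, ha₂⟩ : a ∈ (∅ : Set V)) (Set.notMem_empty a)

theorem matchedOutside_inter_eq_empty {M : G.Subgraph} {X S : Set V}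
    (hN : {v : V | ∃ s ∈ X ∩ S, G.Adj v s} ⊆ X) : matchedOutside M X ∩ S = ∅ := by
  refine Set.eq_empty_iff_forall_notMem.mpr ?_
  rintro v ⟨⟨hvX, w, hwX, hvw⟩, hvS⟩
  exact hwX (hN ⟨v, ⟨hvX, hvS⟩, (M.adj_sub hvw).symm⟩)

theorem MatchingCovered.exists_isPerfectMatching [Nontrivial V] (hmc : MatchingCovered G) :
    ∃ M : G.Subgraph, M.IsPerfectMatching := by
  obtain ⟨v⟩ := hmc.1.nonempty
  obtain ⟨w, hvw⟩ := hmc.1.preconnected.exists_adj_of_nontrivial v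
  obtain ⟨M, hM, -⟩ := hmc.2 s(v, w) hvw
  exact ⟨M, hM⟩

variable [Finite V] {V₁ V₂ : Set V}

theorem IsBipartition.ncard_edgeSet_inter_edgeCut (hbip : IsBipartition G V₁ V₂)
    {M : G.Subgraph} (hM : M.IsMatching) (X : Set V) :
    (M.edgeSet ∩ edgeCut G X).ncard =
      (matchedOutside M X ∩ V₁).ncard + (matchedOutside M X ∩ V₂).ncard := by
  rw [PaperMM.ncard_edgeSet_inter_edgeCut hM,
    ← Set.ncard_inter_add_ncard_sdiff_eq_ncard (matchedOutside M X) V₁]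
  congr 2
  ext v
  have hcover : v ∈ V₁ ∪ V₂ := hbip.1 ▸ Set.mem_univ v
  have hdisj : v ∉ V₁ ∩ V₂ := hbip.2.1 ▸ id
  simp only [Set.mem_sdiff, Set.mem_inter_iff, Set.mem_union] at *
  tauto

theorem IsBipartition.ncard_inter_sdiff_matchedOutside_le (hbip : IsBipartition G V₁ V₂)
    {M : G.Subgraph} (hM : M.IsPerfectMatching) (X : Set V) :
    ((X ∩ V₁) \ matchedOutside M X).ncard ≤ ((X ∩ V₂) \ matchedOutside M X).ncard := by
  choose f hf using fun v => (Subgraph.isPerfectMatching_iff.mp hM v).exists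
  refine Set.ncard_le_ncard_of_injOn f ?_ ?_
  · rintro v ⟨⟨hvX, hv₁⟩, hvin⟩
    have hfX : f v ∈ X := by_contra fun h => hvin ⟨hvX, f v, h, hf v⟩
    refine ⟨⟨hfX, hbip.mem_right_of_adj (M.adj_sub (hf v)) hv₁⟩, ?_⟩
    rintro ⟨-, w, hwX, hw⟩
    exact hwX (hM.1.eq_of_adj_left hw (hf v).symm ▸ hvX)
  · intro v _ v' _ h
    exact hM.1.eq_of_adj_right (hf v) (h ▸ hf v')

theorem IsBipartition.ncard_inter_add_ncard_matchedOutside (hbip : IsBipartition G V₁ V₂)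
    {M : G.Subgraph} (hM : M.IsPerfectMatching) (X : Set V) :
    (X ∩ V₁).ncard + (matchedOutside M X ∩ V₂).ncard =
      (X ∩ V₂).ncard + (matchedOutside M X ∩ V₁).ncard := by
  have hsplit : ∀ S, (X ∩ S).ncard =
      (matchedOutside M X ∩ S).ncard + ((X ∩ S) \ matchedOutside M X).ncard := fun S => by
    rw [← Set.ncard_inter_add_ncard_sdiff_eq_ncard (X ∩ S) (matchedOutside M X)]
    congr 2
    ext v
    exact ⟨fun h => ⟨h.2, h.1.2⟩, fun h => ⟨⟨h.1.1, h.2⟩, h.1⟩⟩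
  have := hbip.ncard_inter_sdiff_matchedOutside_le hM X
  have := hbip.symm.ncard_inter_sdiff_matchedOutside_le hM X
  rw [hsplit V₁, hsplit V₂]
  omega

theorem IsBipartition.neighbors_subset_of_isTightCut (hbip : IsBipartition G V₁ V₂)
    (hmc : MatchingCovered G) {X : Set V} (ht : IsTightCut G X)
    (hcard : (X ∩ V₁).ncard + 1 = (X ∩ V₂).ncard) :
    {v : V | ∃ s ∈ X ∩ V₁, G.Adj v s} ⊆ X := by
  rintro v ⟨t, htX, hvt⟩
  by_contra hv
  obtain ⟨M, hM, hvtM⟩ := hmc.2 s(v, t) hvt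
  have hout : t ∈ matchedOutside M X ∩ V₁ := ⟨⟨htX.1, v, hv, M.adj_symm hvtM⟩, htX.2⟩
  have hpos := (Set.ncard_pos).mpr ⟨t, hout⟩
  have hcut := ht M hM
  rw [hbip.ncard_edgeSet_inter_edgeCut hM.1] at hcut
  have hbal := hbip.ncard_inter_add_ncard_matchedOutside hM X
  omega

theorem IsBipartition.isTightCut_of_ncard_add_one (hbip : IsBipartition G V₁ V₂) {X : Set V}
    (hcard : (X ∩ V₁).ncard + 1 = (X ∩ V₂).ncard)
    (hN : {v : V | ∃ s ∈ X ∩ V₁, G.Adj v s} ⊆ X) : IsTightCut G X := by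
  intro M hM
  have hbal := hbip.ncard_inter_add_ncard_matchedOutside hM X
  rw [matchedOutside_inter_eq_empty hN, Set.ncard_empty] at hbal
  rw [hbip.ncard_edgeSet_inter_edgeCut hM.1, matchedOutside_inter_eq_empty hN, Set.ncard_empty]
  omega

end

theorem statement4_general (V : Type) [Finite V] (B : SimpleGraph V) (V₁ V₂ : Set V)
    (hbip : IsBipartition B V₁ V₂) (hmc : MatchingCovered B)
    (X : Set V) (h1 : 3 ≤ X.ncard) :
    IsTightCut B X ↔
      (((X ∩ V₁).ncard + 1 = (X ∩ V₂).ncard ∧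
          {v : V | ∃ s ∈ X ∩ V₁, B.Adj v s} ⊆ X) ∨
       ((X ∩ V₂).ncard + 1 = (X ∩ V₁).ncard ∧
          {v : V | ∃ s ∈ X ∩ V₂, B.Adj v s} ⊆ X)) := by
  constructor
  · intro ht
    have : Nontrivial V :=
      Set.nontrivial_of_nontrivial (Set.one_lt_ncard_iff_nontrivial.mp (by omega : 1 < X.ncard))
    obtain ⟨M, hM⟩ := hmc.exists_isPerfectMatching
    have hcut := ht M hM
    rw [hbip.ncard_edgeSet_inter_edgeCut hM.1] at hcut
    have hbal := hbip.ncard_inter_add_ncard_matchedOutside hM X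
    by_cases hV₁ : (matchedOutside M X ∩ V₁).ncard = 0
    · have hcard : (X ∩ V₁).ncard + 1 = (X ∩ V₂).ncard := by omega
      exact Or.inl ⟨hcard, hbip.neighbors_subset_of_isTightCut hmc ht hcard⟩
    · have hcard : (X ∩ V₂).ncard + 1 = (X ∩ V₁).ncard := by omega
      exact Or.inr ⟨hcard, hbip.symm.neighbors_subset_of_isTightCut hmc ht hcard⟩
  · rintro (⟨hcard, hN⟩ | ⟨hcard, hN⟩)
    · exact hbip.isTightCut_of_ncard_add_one hcard hN
    · exact hbip.symm.isTightCut_of_ncard_add_one hcard hN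

/-- In a bipartite matching covered graph `B` with bipartition
`(V₁, V₂)`, for `X` with `|X| ≥ 3` and `|V(B) ∖ X| ≥ 3`, `∂(X)` is a tight cut iff
there is `i ∈ {1,2}` with `|X ∩ V_i| = |X ∩ V_{3−i}| − 1` and `N_B(X ∩ V_i) ⊆ X`. -/
theorem statement4 (V : Type) [Finite V] (B : SimpleGraph V) (V₁ V₂ : Set V)
    (hbip : IsBipartition B V₁ V₂) (hmc : MatchingCovered B)
    (X : Set V) (h1 : 3 ≤ X.ncard) (h2 : 3 ≤ ((Set.univ : Set V) \ X).ncard) :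
    IsTightCut B X ↔
      (((X ∩ V₁).ncard + 1 = (X ∩ V₂).ncard ∧
          {v : V | ∃ s ∈ X ∩ V₁, B.Adj v s} ⊆ X) ∨
       ((X ∩ V₂).ncard + 1 = (X ∩ V₁).ncard ∧
          {v : V | ∃ s ∈ X ∩ V₂, B.Adj v s} ⊆ X)) :=
  statement4_general V B V₁ V₂ hbip hmc X h1

end PaperMM
end

section
/- Let k ≥ 1 and let h ≥ 8k be an even integer. Let G be the cylindrical matching grid CG_h of order h with canonical matching M and alternating matching M*, let S be a slice of G of breadth 2k, and let ℓ ∈ {1,…,h−8k+1}. Then the subgraph of S induced by (⋃_{i=ℓ}^{ℓ+8k−1} V(𝒫_i)) ∩ V(S) contains an M*-conformal subgraph S′ which contains the (2k×2k)-grid as a matching minor via a model that uses every vertex of S′. -/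
open SimpleGraph

namespace PaperMM

/-- A linear model of `H` in `A`: fibres are odd paths with cross edges at even
positions. -/
structure LinModel {V U : Type} (A : SimpleGraph V) (H : SimpleGraph U) where
  f : V → U
  len : U → ℕ
  pos : V → ℕ
  len_odd : ∀ u, Odd (len u)
  pos_lt : ∀ x, pos x < len (f x)
  full : ∀ u, ∀ j < len u, ∃ x, f x = u ∧ pos x = j
  inj : ∀ x y, f x = f y → pos x = pos y → x = y
  adj_iff : ∀ x y, A.Adj x y →
      (f x = f y ∧ (pos x + 1 = pos y ∨ pos y + 1 = pos x)) ∨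
      (f x ≠ f y ∧ pos x % 2 = 0 ∧ pos y % 2 = 0 ∧ H.Adj (f x) (f y))
  adj_of : ∀ x y, f x = f y → pos x + 1 = pos y → A.Adj x y
  cross : ∀ u w, H.Adj u w → ∃ x y, f x = u ∧ f y = w ∧ A.Adj x y

theorem linModel_bicontract {U : Type} [Fintype U] (H : SimpleGraph U) :
    ∀ n : ℕ, ∀ {V : Type} (A : SimpleGraph V) (L : LinModel A H),
      (∑ u : U, (L.len u - 1)) = n →
      ∃ K : Graph, Relation.ReflTransGen Bicontract ⟨V, A⟩ K ∧ Nonempty (K.adj ≃g H) := by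
  intro n
  induction n using Nat.strong_induction_on with
  | _ n IH =>
  intro V A L hsum
  by_cases h0 : ∀ u : U, L.len u = 1
  · -- base case: f is an isomorphism
    have hpos0 : ∀ x : V, L.pos x = 0 := by
      intro x; have := L.pos_lt x; rw [h0] at this; omega
    have hinj : Function.Injective L.f := by
      intro x y hxy; exact L.inj x y hxy (by rw [hpos0, hpos0])
    have hsurj : Function.Surjective L.f := by
      intro u; obtain ⟨x, hx, -⟩ := L.full u 0 (by rw [h0]; norm_num); exact ⟨x, hx⟩
    have hbij : Function.Bijective L.f := ⟨hinj, hsurj⟩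
    refine ⟨⟨V, A⟩, Relation.ReflTransGen.refl,
      ⟨{ toEquiv := Equiv.ofBijective L.f hbij, map_rel_iff' := ?_ }⟩⟩
    intro a b
    constructor
    · intro hH
      obtain ⟨x, y, hfx, hfy, hxy⟩ := L.cross _ _ hH
      have hx : x = a := hinj hfx
      have hy : y = b := hinj hfy
      rwa [hx, hy] at hxy
    · intro hA
      rcases L.adj_iff _ _ hA with ⟨-, hc⟩ | ⟨-, -, -, hH⟩
      · rw [hpos0, hpos0] at hc; omega
      · exact hH
  · -- inductive step
    push_neg at h0
    obtain ⟨u₀, hu₀⟩ := h0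
    have hlo := L.len_odd u₀
    rw [Nat.odd_iff] at hlo
    have h3 : 3 ≤ L.len u₀ := by omega
    obtain ⟨x0, hfx0, hpx0⟩ := L.full u₀ 0 (by omega)
    obtain ⟨x1, hfx1, hpx1⟩ := L.full u₀ 1 (by omega)
    obtain ⟨x2, hfx2, hpx2⟩ := L.full u₀ 2 (by omega)
    have hne01 : x0 ≠ x1 := fun h => by rw [h, hpx1] at hpx0; omega
    have hne02 : x0 ≠ x2 := fun h => by rw [h, hpx2] at hpx0; omega
    have hne12 : x1 ≠ x2 := fun h => by rw [h, hpx2] at hpx1; omega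
    have hat : ∀ x : V, L.f x = u₀ → (L.pos x = 0 → x = x0) ∧ (L.pos x = 1 → x = x1) ∧
        (L.pos x = 2 → x = x2) := by
      intro x hx
      exact ⟨fun h => L.inj x x0 (by rw [hx, hfx0]) (by rw [h, hpx0]),
             fun h => L.inj x x1 (by rw [hx, hfx1]) (by rw [h, hpx1]),
             fun h => L.inj x x2 (by rw [hx, hfx2]) (by rw [h, hpx2])⟩
    have hnbhd : A.neighborSet x1 = {x0, x2} := by
      ext y
      simp only [SimpleGraph.mem_neighborSet, Set.mem_insert_iff, Set.mem_singleton_iff]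
      constructor
      · intro hy
        rcases L.adj_iff _ _ hy with ⟨hf, hc⟩ | ⟨-, hp, -, -⟩
        · rw [hpx1] at hc
          have hfy : L.f y = u₀ := by rw [← hf, hfx1]
          rcases hc with h | h
          · exact Or.inr ((hat y hfy).2.2 (by omega))
          · exact Or.inl ((hat y hfy).1 (by omega))
        · rw [hpx1] at hp; omega
      · rintro (h | h)
        · rw [h]
          exact (L.adj_of x0 x1 (by rw [hfx0, hfx1]) (by rw [hpx0, hpx1])).symm
        · rw [h]
          exact L.adj_of x1 x2 (by rw [hfx1, hfx2]) (by rw [hpx1, hpx2])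
    classical
    have hsurv : ∀ x : V, x ≠ x0 → x ≠ x2 → L.f x = u₀ → L.pos x = 1 ∨ 3 ≤ L.pos x := by
      intro x h0' h2' hx
      by_cases hp0 : L.pos x = 0
      · exact absurd ((hat x hx).1 hp0) h0'
      · by_cases hp2 : L.pos x = 2
        · exact absurd ((hat x hx).2.2 hp2) h2'
        · omega
    -- the new model
    let f' : {x : V // x ≠ x0 ∧ x ≠ x2} → U := fun x => L.f x.1
    let len' : U → ℕ := fun u => if u = u₀ then L.len u - 2 else L.len u
    let pos' : {x : V // x ≠ x0 ∧ x ≠ x2} → ℕ := fun x =>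
      if L.f x.1 = u₀ then (if L.pos x.1 = 1 then 0 else L.pos x.1 - 2) else L.pos x.1
    have f'def : ∀ x, f' x = L.f x.1 := fun _ => rfl
    have len'def : ∀ u, len' u = if u = u₀ then L.len u - 2 else L.len u := fun _ => rfl
    have pos'def : ∀ x, pos' x =
        if L.f x.1 = u₀ then (if L.pos x.1 = 1 then 0 else L.pos x.1 - 2) else L.pos x.1 :=
      fun _ => rfl
    have hx1mem : x1 ≠ x0 ∧ x1 ≠ x2 := ⟨hne01.symm, hne12⟩
    have hpos'x1 : ∀ x : {x : V // x ≠ x0 ∧ x ≠ x2}, x.1 = x1 → pos' x = 0 := by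
      intro x hx
      rw [pos'def, hx, hfx1, if_pos rfl, hpx1, if_pos rfl]
    have hpos'u₀ : ∀ (x : {x : V // x ≠ x0 ∧ x ≠ x2}), L.f x.1 = u₀ → 3 ≤ L.pos x.1 →
        pos' x = L.pos x.1 - 2 := by
      intro x hx h3'
      rw [pos'def, if_pos hx, if_neg (by omega)]
    have hpos'o : ∀ (x : {x : V // x ≠ x0 ∧ x ≠ x2}), L.f x.1 ≠ u₀ → pos' x = L.pos x.1 := by
      intro x hx
      rw [pos'def, if_neg hx]
    have key_adj : ∀ (x y : {x : V // x ≠ x0 ∧ x ≠ x2}),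
        (bicontractAt A x1 x0 x2).Adj x y →
        (f' x = f' y ∧ (pos' x + 1 = pos' y ∨ pos' y + 1 = pos' x)) ∨
        (f' x ≠ f' y ∧ pos' x % 2 = 0 ∧ pos' y % 2 = 0 ∧ H.Adj (f' x) (f' y)) := by
      have hv : ∀ (x y : {x : V // x ≠ x0 ∧ x ≠ x2}), x.1 = x1 → y.1 ≠ x1 →
          (A.Adj y.1 x0 ∨ A.Adj y.1 x2) →
          (f' x = f' y ∧ (pos' x + 1 = pos' y ∨ pos' y + 1 = pos' x)) ∨
          (f' x ≠ f' y ∧ pos' x % 2 = 0 ∧ pos' y % 2 = 0 ∧ H.Adj (f' x) (f' y)) := by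
        intro x y hx hy hadj
        have hfx : f' x = u₀ := by rw [f'def, hx, hfx1]
        have hpx : pos' x = 0 := hpos'x1 x hx
        rcases hadj with hadj | hadj
        · rcases L.adj_iff _ _ hadj with ⟨hf, hc⟩ | ⟨hne, hp, -, hH⟩
          · have hfy : L.f y.1 = u₀ := by rw [hf, hfx0]
            rw [hpx0] at hc
            have : L.pos y.1 = 1 := by omega
            exact absurd ((hat y.1 hfy).2.1 this) hy
          · rw [hfx0] at hne hH
            refine Or.inr ⟨?_, ?_, ?_, ?_⟩
            · rw [hfx, f'def]; exact fun h => hne h.symm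
            · rw [hpx]
            · rw [hpos'o y hne]; exact hp
            · rw [hfx, f'def]; exact hH.symm
        · rcases L.adj_iff _ _ hadj with ⟨hf, hc⟩ | ⟨hne, hp, -, hH⟩
          · have hfy : L.f y.1 = u₀ := by rw [hf, hfx2]
            rw [hpx2] at hc
            rcases hc with h | h
            · exact absurd ((hat y.1 hfy).2.1 (by omega)) hy
            · have hp3 : L.pos y.1 = 3 := by omega
              refine Or.inl ⟨?_, Or.inl ?_⟩
              · rw [hfx, f'def, hfy]
              · rw [hpx, hpos'u₀ y hfy (by omega), hp3]
          · rw [hfx2] at hne hH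
            refine Or.inr ⟨?_, ?_, ?_, ?_⟩
            · rw [hfx, f'def]; exact fun h => hne h.symm
            · rw [hpx]
            · rw [hpos'o y hne]; exact hp
            · rw [hfx, f'def]; exact hH.symm
      intro x y hadj
      rcases hadj with ⟨hx, hy, hadj⟩ | ⟨hx, hy, hadj⟩ | ⟨hy, hx, hadj⟩
      · -- ordinary edge
        rcases L.adj_iff _ _ hadj with ⟨hf, hc⟩ | ⟨hne, hpx, hpy, hH⟩
        · refine Or.inl ⟨by rw [f'def, f'def, hf], ?_⟩
          by_cases hu : L.f x.1 = u₀
          · have hu' : L.f y.1 = u₀ := by rw [← hf]; exact hu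
            have hx3 : 3 ≤ L.pos x.1 := by
              rcases hsurv x.1 x.2.1 x.2.2 hu with h | h
              · exact absurd ((hat x.1 hu).2.1 h) hx
              · exact h
            have hy3 : 3 ≤ L.pos y.1 := by
              rcases hsurv y.1 y.2.1 y.2.2 hu' with h | h
              · exact absurd ((hat y.1 hu').2.1 h) hy
              · exact h
            rw [hpos'u₀ x hu hx3, hpos'u₀ y hu' hy3]
            omega
          · have hu' : L.f y.1 ≠ u₀ := by rw [← hf]; exact hu
            rw [hpos'o x hu, hpos'o y hu']
            exact hc
        · refine Or.inr ⟨by rw [f'def, f'def]; exact hne, ?_, ?_, by rw [f'def, f'def]; exact hH⟩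
          · by_cases hu : L.f x.1 = u₀
            · have hx3 : 3 ≤ L.pos x.1 := by
                rcases hsurv x.1 x.2.1 x.2.2 hu with h | h
                · omega
                · exact h
              rw [hpos'u₀ x hu hx3]; omega
            · rw [hpos'o x hu]; exact hpx
          · by_cases hu : L.f y.1 = u₀
            · have hy3 : 3 ≤ L.pos y.1 := by
                rcases hsurv y.1 y.2.1 y.2.2 hu with h | h
                · omega
                · exact h
              rw [hpos'u₀ y hu hy3]; omega
            · rw [hpos'o y hu]; exact hpy
      · exact hv x y hx hy hadj
      · rcases hv y x hy hx hadj with ⟨h1, h2⟩ | ⟨h1, h2, h3', h4⟩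
        · exact Or.inl ⟨h1.symm, h2.symm⟩
        · exact Or.inr ⟨fun h => h1 h.symm, h3', h2, h4.symm⟩
    have hlen_odd : ∀ u, Odd (len' u) := by
      · intro u
        rw [len'def]
        split
        · rename_i h; subst h; rw [Nat.odd_iff]; omega
        · exact L.len_odd u
    have hpos_lt : ∀ x, pos' x < len' (f' x) := by
      · intro x
        by_cases hu : L.f x.1 = u₀
        · have h1 : len' (f' x) = L.len u₀ - 2 := by
            rw [f'def, hu, len'def, if_pos rfl]
          rw [h1]
          rcases hsurv x.1 x.2.1 x.2.2 hu with h | h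
          · rw [hpos'x1 x ((hat x.1 hu).2.1 h)]
            omega
          · rw [hpos'u₀ x hu h]
            have := L.pos_lt x.1
            rw [hu] at this
            omega
        · have h1 : len' (f' x) = L.len (L.f x.1) := by
            rw [f'def, len'def, if_neg hu]
          rw [h1, hpos'o x hu]
          exact L.pos_lt x.1
    have hfull : ∀ u, ∀ j < len' u, ∃ x, f' x = u ∧ pos' x = j := by
      · intro u j hj
        rw [len'def] at hj
        by_cases hu : u = u₀
        · rw [if_pos hu, hu] at hj
          rcases Nat.eq_zero_or_pos j with rfl | hjpos
          · exact ⟨⟨x1, hx1mem⟩, by show L.f x1 = u; rw [hfx1, hu], hpos'x1 _ rfl⟩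
          · obtain ⟨x, hfx, hpx⟩ := L.full u₀ (j + 2) (by omega)
            have hxne0 : x ≠ x0 := fun h => by rw [h, hpx0] at hpx; omega
            have hxne2 : x ≠ x2 := fun h => by rw [h, hpx2] at hpx; omega
            refine ⟨⟨x, hxne0, hxne2⟩, by show L.f x = u; rw [hfx, hu], ?_⟩
            have h5 : pos' ⟨x, hxne0, hxne2⟩ = L.pos x - 2 :=
              hpos'u₀ ⟨x, hxne0, hxne2⟩ hfx (by show 3 ≤ L.pos x; omega)
            rw [h5]
            omega
        · rw [if_neg hu] at hj
          obtain ⟨x, hfx, hpx⟩ := L.full u j hj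
          have hxne0 : x ≠ x0 := fun h => by rw [h, hfx0] at hfx; exact hu hfx.symm
          have hxne2 : x ≠ x2 := fun h => by rw [h, hfx2] at hfx; exact hu hfx.symm
          refine ⟨⟨x, hxne0, hxne2⟩, by show L.f x = u; exact hfx, ?_⟩
          have h5 : pos' ⟨x, hxne0, hxne2⟩ = L.pos x :=
            hpos'o ⟨x, hxne0, hxne2⟩ (by show L.f x ≠ u₀; rw [hfx]; exact hu)
          rw [h5]
          exact hpx
    have hinj' : ∀ x y, f' x = f' y → pos' x = pos' y → x = y := by
      · intro x y hf hp
        have hfval : L.f x.1 = L.f y.1 := by rw [← f'def, ← f'def]; exact hf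
        by_cases hu : L.f x.1 = u₀
        · have hu' : L.f y.1 = u₀ := by rw [← hfval]; exact hu
          have hx' := hsurv x.1 x.2.1 x.2.2 hu
          have hy' := hsurv y.1 y.2.1 y.2.2 hu'
          have hxx : x.1 = y.1 := by
            rcases hx' with h1 | h1 <;> rcases hy' with h2 | h2
            · exact L.inj x.1 y.1 hfval (by omega)
            · exfalso
              rw [hpos'x1 x ((hat x.1 hu).2.1 h1), hpos'u₀ y hu' h2] at hp
              omega
            · exfalso
              rw [hpos'u₀ x hu h1, hpos'x1 y ((hat y.1 hu').2.1 h2)] at hp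
              omega
            · rw [hpos'u₀ x hu h1, hpos'u₀ y hu' h2] at hp
              exact L.inj x.1 y.1 hfval (by omega)
          exact Subtype.ext hxx
        · have hu' : L.f y.1 ≠ u₀ := by rw [← hfval]; exact hu
          rw [hpos'o x hu, hpos'o y hu'] at hp
          exact Subtype.ext (L.inj x.1 y.1 hfval hp)
    have hadj_of : ∀ x y, f' x = f' y → pos' x + 1 = pos' y → (bicontractAt A x1 x0 x2).Adj x y := by
      · -- adj_of
        intro x y hf hp
        have hfval : L.f x.1 = L.f y.1 := by rw [← f'def, ← f'def]; exact hf
        by_cases hu : L.f x.1 = u₀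
        · have hu' : L.f y.1 = u₀ := by rw [← hfval]; exact hu
          rcases hsurv x.1 x.2.1 x.2.2 hu with h1 | h1
          · have hxx1 : x.1 = x1 := (hat x.1 hu).2.1 h1
            rw [hpos'x1 x hxx1] at hp
            rcases hsurv y.1 y.2.1 y.2.2 hu' with h2 | h2
            · exfalso
              rw [hpos'x1 y ((hat y.1 hu').2.1 h2)] at hp
              omega
            · rw [hpos'u₀ y hu' h2] at hp
              have hp3 : L.pos y.1 = 3 := by omega
              have hyne : y.1 ≠ x1 := fun h => by rw [h, hpx1] at hp3; omega
              exact Or.inr (Or.inl ⟨hxx1, hyne,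
                Or.inr (L.adj_of x2 y.1 (by rw [hfx2, hu']) (by rw [hpx2, hp3])).symm⟩)
          · rcases hsurv y.1 y.2.1 y.2.2 hu' with h2 | h2
            · exfalso
              rw [hpos'x1 y ((hat y.1 hu').2.1 h2), hpos'u₀ x hu h1] at hp
              omega
            · rw [hpos'u₀ x hu h1, hpos'u₀ y hu' h2] at hp
              have hxne : x.1 ≠ x1 := fun h => by rw [h, hpx1] at h1; omega
              have hyne : y.1 ≠ x1 := fun h => by rw [h, hpx1] at h2; omega
              exact Or.inl ⟨hxne, hyne, L.adj_of x.1 y.1 hfval (by omega)⟩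
        · have hu' : L.f y.1 ≠ u₀ := by rw [← hfval]; exact hu
          rw [hpos'o x hu, hpos'o y hu'] at hp
          have hxne : x.1 ≠ x1 := fun h => by rw [h] at hu; exact hu hfx1
          have hyne : y.1 ≠ x1 := fun h => by rw [h] at hu'; exact hu' hfx1
          exact Or.inl ⟨hxne, hyne, L.adj_of x.1 y.1 hfval hp⟩
    have hcross : ∀ u w, H.Adj u w → ∃ x y, f' x = u ∧ f' y = w ∧ (bicontractAt A x1 x0 x2).Adj x y := by
      · -- cross
        intro u w hH
        obtain ⟨x, y, hfx, hfy, hadj⟩ := L.cross u w hH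
        have huw : u ≠ w := hH.ne
        by_cases hxu : x = x0 ∨ x = x2
        · have hu : u = u₀ := by
            rcases hxu with h | h
            · rw [← hfx, h, hfx0]
            · rw [← hfx, h, hfx2]
          have hwne : w ≠ u₀ := by rw [← hu]; exact huw.symm
          have hyne0 : y ≠ x0 := fun h => by rw [h, hfx0] at hfy; exact hwne hfy.symm
          have hyne2 : y ≠ x2 := fun h => by rw [h, hfx2] at hfy; exact hwne hfy.symm
          have hynex1 : y ≠ x1 := fun h => by rw [h, hfx1] at hfy; exact hwne hfy.symm
          refine ⟨⟨x1, hx1mem⟩, ⟨y, hyne0, hyne2⟩, by rw [f'def, hfx1, hu], hfy, ?_⟩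
          refine Or.inr (Or.inl ⟨rfl, hynex1, ?_⟩)
          rcases hxu with h | h
          · rw [h] at hadj; exact Or.inl hadj.symm
          · rw [h] at hadj; exact Or.inr hadj.symm
        · push_neg at hxu
          by_cases hyu : y = x0 ∨ y = x2
          · have hw : w = u₀ := by
              rcases hyu with h | h
              · rw [← hfy, h, hfx0]
              · rw [← hfy, h, hfx2]
            have hune : u ≠ u₀ := by rw [← hw]; exact huw
            have hxnex1 : x ≠ x1 := fun h => by rw [h, hfx1] at hfx; exact hune hfx.symm
            refine ⟨⟨x, hxu.1, hxu.2⟩, ⟨x1, hx1mem⟩, hfx, by rw [f'def, hfx1, hw], ?_⟩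
            refine Or.inr (Or.inr ⟨rfl, hxnex1, ?_⟩)
            rcases hyu with h | h
            · rw [h] at hadj; exact Or.inl hadj
            · rw [h] at hadj; exact Or.inr hadj
          · push_neg at hyu
            have hsame : L.f x ≠ L.f y := by
              intro hf
              exact huw (by rw [← hfx, ← hfy, ← hf])
            have hxnex1 : x ≠ x1 := by
              intro h
              rcases L.adj_iff _ _ hadj with ⟨hf, -⟩ | ⟨-, hp, -, -⟩
              · exact hsame hf
              · rw [h, hpx1] at hp; omega
            have hynex1 : y ≠ x1 := by
              intro h
              rcases L.adj_iff _ _ hadj with ⟨hf, -⟩ | ⟨-, -, hp, -⟩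
              · exact hsame hf
              · rw [h, hpx1] at hp; omega
            exact ⟨⟨x, hxu.1, hxu.2⟩, ⟨y, hyu.1, hyu.2⟩, hfx, hfy,
              Or.inl ⟨hxnex1, hynex1, hadj⟩⟩
    -- the sum decreases by 2
    have hsum' : (∑ u : U, (len' u - 1)) = n - 2 := by
      have key : ∀ u : U, len' u - 1 + (if u = u₀ then 2 else 0) = L.len u - 1 := by
        intro u
        rw [len'def]
        split
        · rename_i h; subst h; omega
        · omega
      have h1 : (∑ u : U, (len' u - 1 + if u = u₀ then 2 else 0)) = ∑ u : U, (L.len u - 1) :=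
        Finset.sum_congr rfl (fun u _ => key u)
      rw [Finset.sum_add_distrib] at h1
      rw [Finset.sum_ite_eq' Finset.univ u₀ (fun _ => 2)] at h1
      simp only [Finset.mem_univ, if_true] at h1
      omega
    have hn2 : 2 ≤ n := by
      have h2' : 2 ≤ L.len u₀ - 1 := by omega
      have hle : L.len u₀ - 1 ≤ ∑ u : U, (L.len u - 1) :=
        Finset.single_le_sum (f := fun u => L.len u - 1) (fun _ _ => Nat.zero_le _)
          (Finset.mem_univ u₀)
      omega
    obtain ⟨K, hK, hKiso⟩ := IH (n - 2) (by omega) (bicontractAt A x1 x0 x2)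
      ⟨f', len', pos', hlen_odd, hpos_lt, hfull, hinj', key_adj, hadj_of, hcross⟩ hsum'
    refine ⟨K, Relation.ReflTransGen.head ?_ hK, hKiso⟩
    exact ⟨x1, x0, x2, hne02, hnbhd, ⟨SimpleGraph.Iso.refl⟩⟩

/-! ### Auxiliary arithmetic for Statement 6 -/

/-- Starting column of the row segment on cycle `i`. -/
def Lrow (l i : ℕ) : ℕ := 2*l + (i+1) % 2

/-- Offset of the `b`-th block within a row segment. -/
def obk (b : ℕ) : ℕ := 8*b + b % 2

/-- Length of the `b`-th block. -/
def fibLen (b : ℕ) : ℕ := if b % 2 = 0 then 9 else 7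

/-- Block index of offset `j` within a row segment. -/
def blk (j : ℕ) : ℕ := if j % 8 = 0 ∧ (j/8) % 2 = 1 then j/8 - 1 else j/8

/-- The chosen vertical connector column pair between cycles `i` and `i+1` at
block `b`:  first component on cycle `i`, second on cycle `i+1`. -/
def connc (l i b : ℕ) : ℕ × ℕ :=
  if i % 2 = 1 then
    (if b % 2 = 0 then (2*l+8*b + (2*l)%4, 2*l+8*b+(2*l)%4+1)
     else (2*l+8*b+3+(2*l)%4, 2*l+8*b+2+(2*l)%4))
  else
    (if b % 2 = 0 then (2*l+8*b+3-(2*l)%4, 2*l+8*b+2-(2*l)%4)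
     else (2*l+8*b+4-(2*l)%4, 2*l+8*b+5-(2*l)%4))

lemma fibLen_odd (b : ℕ) : Odd (fibLen b) := by
  unfold fibLen; split_ifs <;> decide

lemma blk_lt (k j : ℕ) (hj : j < 16*k) : blk j < 2*k := by
  unfold blk; split_ifs <;> omega

lemma blk_spec (j : ℕ) : obk (blk j) ≤ j ∧ j - obk (blk j) < fibLen (blk j) := by
  unfold blk obk fibLen; split_ifs <;> omega

lemma blk_obk (b t : ℕ) (ht : t < fibLen b) : blk (obk b + t) = b := by
  unfold blk obk; unfold fibLen at ht; split_ifs at ht ⊢ <;> omega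

lemma obk_add (b : ℕ) : obk b + fibLen b = obk (b+1) := by
  unfold obk fibLen; split_ifs <;> omega

lemma obk_le (b c : ℕ) (h : b ≤ c) : obk b ≤ obk c := by
  unfold obk; omega

lemma blk_step (j : ℕ) :
    (blk (j+1) = blk j ∧ j + 1 - obk (blk j) = (j - obk (blk j)) + 1) ∨
    (blk (j+1) = blk j + 1 ∧ j - obk (blk j) = fibLen (blk j) - 1 ∧
      j + 1 = obk (blk j + 1)) := by
  unfold blk obk fibLen; split_ifs <;> omega

lemma conn_spec (l i b : ℕ) :
    ∃ pc pd : ℕ, pc % 2 = 0 ∧ pd % 2 = 0 ∧ pc < fibLen b ∧ pd < fibLen b ∧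
      (connc l i b).1 = Lrow l i + obk b + pc ∧
      (connc l i b).2 = Lrow l (i+1) + obk b + pd := by
  unfold connc Lrow obk fibLen
  split_ifs with h1 h2 h2 <;> dsimp only
  · exact ⟨(2*l)%4, (2*l)%4, by omega, by omega, by omega, by omega, by omega, by omega⟩
  · exact ⟨2-(2*l)%4, 2-(2*l)%4, by omega, by omega, by omega, by omega, by omega, by omega⟩
  · exact ⟨2+(2*l)%4, (2*l)%4, by omega, by omega, by omega, by omega, by omega, by omega⟩
  · exact ⟨2-(2*l)%4, 4-(2*l)%4, by omega, by omega, by omega, by omega, by omega, by omega⟩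

lemma conn_cg (l i b : ℕ) :
    ((connc l i b).1 % 4 = 0 ∧ (connc l i b).2 = (connc l i b).1 + 1) ∨
    ((connc l i b).2 % 4 = 2 ∧ (connc l i b).1 = (connc l i b).2 + 1) := by
  unfold connc
  split_ifs <;> dsimp only <;>
    first
      | exact Or.inl ⟨by omega, by omega⟩
      | exact Or.inr ⟨by omega, by omega⟩

/-- The vertex set of the subgraph `S'`. -/
def SVerts (k h s l : ℕ) : Set (Fin h × Fin (4*h)) :=
  {x | s ≤ x.1.1 ∧ x.1.1 < s + 2*k ∧ Lrow l x.1.1 ≤ x.2.1 ∧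
       x.2.1 < Lrow l x.1.1 + 16*k}

/-- Horizontal (along-cycle) edges of `S'`. -/
def SAdjH (k h s l : ℕ) (x y : Fin h × Fin (4*h)) : Prop :=
  x ∈ SVerts k h s l ∧ y ∈ SVerts k h s l ∧ x.1 = y.1 ∧ x.2.1 + 1 = y.2.1

/-- Vertical (connector) edges of `S'`. -/
def SAdjV (k h s l : ℕ) (x y : Fin h × Fin (4*h)) : Prop :=
  x ∈ SVerts k h s l ∧ y ∈ SVerts k h s l ∧ ∃ b, b < 2*k ∧
    x.1.1 + 1 = y.1.1 ∧ x.2.1 = (connc l x.1.1 b).1 ∧ y.2.1 = (connc l x.1.1 b).2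

/-- The adjacency of `S'`. -/
def SAdj (k h s l : ℕ) (x y : Fin h × Fin (4*h)) : Prop :=
  SAdjH k h s l x y ∨ SAdjH k h s l y x ∨ SAdjV k h s l x y ∨ SAdjV k h s l y x

lemma cmg_adj_h {h : ℕ} (x y : Fin h × Fin (4*h)) (h1 : x.1 = y.1)
    (h2 : x.2.1 + 1 = y.2.1) : (cylindricalMatchingGrid h).Adj x y := by
  rw [cylindricalMatchingGrid, SimpleGraph.fromRel_adj]
  refine ⟨?_, Or.inl (Or.inl ⟨h1, ?_⟩)⟩
  · intro hxy
    rw [hxy] at h2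
    omega
  · rw [h2, Nat.mod_eq_of_lt y.2.isLt]

lemma cmg_adj_vA {h : ℕ} (x y : Fin h × Fin (4*h)) (h1 : x.1.1 + 1 = y.1.1)
    (h2 : x.2.1 % 4 = 0) (h3 : x.2.1 + 1 = y.2.1) :
    (cylindricalMatchingGrid h).Adj x y := by
  rw [cylindricalMatchingGrid, SimpleGraph.fromRel_adj]
  refine ⟨?_, Or.inl (Or.inr (Or.inl ⟨h1, h2, h3⟩))⟩
  intro hxy
  rw [hxy] at h1
  omega

lemma cmg_adj_vB {h : ℕ} (x y : Fin h × Fin (4*h)) (h1 : x.1.1 + 1 = y.1.1)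
    (h2 : y.2.1 % 4 = 2) (h3 : y.2.1 + 1 = x.2.1) :
    (cylindricalMatchingGrid h).Adj x y := by
  rw [cylindricalMatchingGrid, SimpleGraph.fromRel_adj]
  refine ⟨?_, Or.inr (Or.inr (Or.inr ⟨h1, h2, h3⟩))⟩
  intro hxy
  rw [hxy] at h1
  omega


/-- In the cylindrical matching grid of even order `h ≥ 8k`, the
subgraph of a slice `S` of breadth `2k` induced by the rows `𝒫_ℓ, …, 𝒫_{ℓ+8k−1}`
contains an `M*`-conformal subgraph `S′` containing the `(2k × 2k)`-grid as a
matching minor via a model using every vertex of `S′`.  (`s` and `ℓ` are the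
0-based starting indices of the slice and of the row range.) -/
theorem statement6 (k h : ℕ) (hk : 1 ≤ k) (hh : 8*k ≤ h) (heven : Even h)
    (M : (cylindricalMatchingGrid h).Subgraph)
    (hM : M.IsPerfectMatching ∧ M.edgeSet = cmgCanonicalEdges h)
    (Mstar : (cylindricalMatchingGrid h).Subgraph)
    (hMstar : Mstar.IsPerfectMatching ∧ Mstar.edgeSet = cmgAlternatingEdges h)
    (s : ℕ) (hs : s + 2*k ≤ h) (l : ℕ) (hl : l + 8*k ≤ h) :
    ∃ S' : (cylindricalMatchingGrid h).Subgraph,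
      S' ≤ (⊤ : (cylindricalMatchingGrid h).Subgraph).induce
          {x : Fin h × Fin (4*h) |
            (s ≤ x.1.1 ∧ x.1.1 < s + 2*k) ∧ (2*l ≤ x.2.1 ∧ x.2.1 < 2*l + 16*k + 2)} ∧
      MConformalSet Mstar S'.verts ∧
      ∃ K : Graph,
        Relation.ReflTransGen Bicontract ⟨↥S'.verts, S'.coe⟩ K ∧
        Nonempty (K.adj ≃g gridGraph (2*k) (2*k)) := by
  classical
  have h8 : 8 ≤ h := by omega
  have hmem_iff : ∀ x : Fin h × Fin (4*h), x ∈ SVerts k h s l ↔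
      (s ≤ x.1.1 ∧ x.1.1 < s + 2*k ∧ Lrow l x.1.1 ≤ x.2.1 ∧
        x.2.1 < Lrow l x.1.1 + 16*k) := fun _ => Iff.rfl
  have hadj_sub : ∀ x y : Fin h × Fin (4*h), SAdj k h s l x y →
      (cylindricalMatchingGrid h).Adj x y := by
    rintro v w (hvw | hvw | hvw | hvw)
    · exact cmg_adj_h v w hvw.2.2.1 hvw.2.2.2
    · exact (cmg_adj_h w v hvw.2.2.1 hvw.2.2.2).symm
    · obtain ⟨hv, hw, b, hb, hi, hc, hd⟩ := hvw
      rcases conn_cg l (v.1.1) b with ⟨h4, h5⟩ | ⟨h4, h5⟩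
      · exact cmg_adj_vA v w hi (by rw [hc]; exact h4) (by omega)
      · exact cmg_adj_vB v w hi (by rw [hd]; exact h4) (by omega)
    · obtain ⟨hv, hw, b, hb, hi, hc, hd⟩ := hvw
      rcases conn_cg l (w.1.1) b with ⟨h4, h5⟩ | ⟨h4, h5⟩
      · exact (cmg_adj_vA w v hi (by rw [hc]; exact h4) (by omega)).symm
      · exact (cmg_adj_vB w v hi (by rw [hd]; exact h4) (by omega)).symm
  have hedge_vert : ∀ x y : Fin h × Fin (4*h), SAdj k h s l x y →
      x ∈ SVerts k h s l := by
    rintro v w (hvw | hvw | hvw | hvw)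
    exacts [hvw.1, hvw.2.1, hvw.1, hvw.2.1]
  have hsymm : Symmetric (SAdj k h s l) := by
    rintro v w (hvw | hvw | hvw | hvw)
    exacts [Or.inr (Or.inl hvw), Or.inl hvw, Or.inr (Or.inr (Or.inr hvw)),
      Or.inr (Or.inr (Or.inl hvw))]
  refine ⟨⟨SVerts k h s l, SAdj k h s l, fun {v w} hvw => hadj_sub v w hvw,
      fun {v w} hvw => hedge_vert v w hvw, ⟨fun _ _ hab => hsymm hab⟩⟩, ?_, ?_, ?_⟩
  · -- contained in the box
    constructor
    · intro x hx
      obtain ⟨h1, h2, h3, h4⟩ := (hmem_iff x).mp hx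
      refine ⟨⟨h1, h2⟩, ?_, ?_⟩ <;> (unfold Lrow at h3 h4; omega)
    · intro x y hxy
      rw [SimpleGraph.Subgraph.induce_adj]
      have hx := hedge_vert x y hxy
      have hy := hedge_vert y x (hsymm hxy)
      obtain ⟨h1, h2, h3, h4⟩ := (hmem_iff x).mp hx
      obtain ⟨h5, h6, h7, h8'⟩ := (hmem_iff y).mp hy
      refine ⟨⟨⟨h1, h2⟩, ?_, ?_⟩, ⟨⟨h5, h6⟩, ?_, ?_⟩, ?_⟩
      · unfold Lrow at h3 h4; omega
      · unfold Lrow at h3 h4; omega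
      · unfold Lrow at h7 h8'; omega
      · unfold Lrow at h7 h8'; omega
      · rw [SimpleGraph.Subgraph.top_adj]
        exact hadj_sub x y hxy
  · -- M*-conformality
    intro v hv
    replace hv : v ∉ SVerts k h s l := hv
    have hLv : Lrow l v.1.1 = 2*l + (v.1.1 + 1) % 2 := rfl
    by_cases hpar : (v.1.1 + v.2.1) % 2 = 1
    · by_cases hwrap : v.2.1 + 1 < 4*h
      · refine ⟨(v.1, ⟨v.2.1 + 1, hwrap⟩), ?_, ?_⟩
        · intro hw
          replace hw : s ≤ v.1.1 ∧ v.1.1 < s + 2*k ∧ Lrow l v.1.1 ≤ v.2.1 + 1 ∧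
              v.2.1 + 1 < Lrow l v.1.1 + 16*k := hw
          apply hv
          refine (hmem_iff v).mpr ⟨hw.1, hw.2.1, ?_, ?_⟩ <;>
            (unfold Lrow at hw ⊢; omega)
        · rw [← SimpleGraph.Subgraph.mem_edgeSet, hMstar.2]
          exact ⟨v, (v.1, ⟨v.2.1 + 1, hwrap⟩), rfl, rfl,
            Nat.mod_eq_of_lt hwrap, hpar⟩
      · -- wrap-around : v.2.1 = 4h - 1
        have hveq : v.2.1 = 4*h - 1 := by have := v.2.isLt; omega
        refine ⟨(v.1, ⟨0, by omega⟩), ?_, ?_⟩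
        · intro hw
          replace hw : s ≤ v.1.1 ∧ v.1.1 < s + 2*k ∧ Lrow l v.1.1 ≤ 0 ∧
              (0:ℕ) < Lrow l v.1.1 + 16*k := hw
          unfold Lrow at hw
          omega
        · rw [← SimpleGraph.Subgraph.mem_edgeSet, hMstar.2]
          refine ⟨v, (v.1, ⟨0, by omega⟩), rfl, rfl, ?_, hpar⟩
          show (v.2.1 + 1) % (4*h) = 0
          rw [show v.2.1 + 1 = 4*h from by omega, Nat.mod_self]
    · by_cases hzero : v.2.1 = 0
      · refine ⟨(v.1, ⟨4*h - 1, by omega⟩), ?_, ?_⟩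
        · intro hw
          replace hw : s ≤ v.1.1 ∧ v.1.1 < s + 2*k ∧ Lrow l v.1.1 ≤ 4*h - 1 ∧
              4*h - 1 < Lrow l v.1.1 + 16*k := hw
          unfold Lrow at hw
          omega
        · rw [← SimpleGraph.Subgraph.mem_edgeSet, hMstar.2]
          refine ⟨(v.1, ⟨4*h - 1, by omega⟩), v, Sym2.eq_swap, rfl, ?_, ?_⟩
          · show (4*h - 1 + 1) % (4*h) = v.2.1
            rw [show 4*h - 1 + 1 = 4*h from by omega, Nat.mod_self, hzero]
          · show (v.1.1 + (4*h - 1)) % 2 = 1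
            omega
      · refine ⟨(v.1, ⟨v.2.1 - 1, by omega⟩), ?_, ?_⟩
        · intro hw
          replace hw : s ≤ v.1.1 ∧ v.1.1 < s + 2*k ∧ Lrow l v.1.1 ≤ v.2.1 - 1 ∧
              v.2.1 - 1 < Lrow l v.1.1 + 16*k := hw
          apply hv
          refine (hmem_iff v).mpr ⟨hw.1, hw.2.1, ?_, ?_⟩ <;>
            (unfold Lrow at hw ⊢; omega)
        · rw [← SimpleGraph.Subgraph.mem_edgeSet, hMstar.2]
          refine ⟨(v.1, ⟨v.2.1 - 1, by omega⟩), v, Sym2.eq_swap, rfl, ?_, ?_⟩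
          · show (v.2.1 - 1 + 1) % (4*h) = v.2.1
            rw [show v.2.1 - 1 + 1 = v.2.1 from by omega]
            exact Nat.mod_eq_of_lt v.2.isLt
          · show (v.1.1 + (v.2.1 - 1)) % 2 = 1
            omega
  · -- the matching-minor part
    have hb1 : ∀ x : Fin h × Fin (4*h), x ∈ SVerts k h s l →
        x.1.1 - s < 2*k ∧ blk (x.2.1 - Lrow l x.1.1) < 2*k := by
      intro x hx
      obtain ⟨h1, h2, h3, h4⟩ := (hmem_iff x).mp hx
      exact ⟨by omega, blk_lt k _ (by omega)⟩
    let F : ↥(SVerts k h s l) → Fin (2*k) × Fin (2*k) := fun x =>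
      (⟨x.1.1.1 - s, (hb1 x.1 x.2).1⟩, ⟨blk (x.1.2.1 - Lrow l x.1.1.1), (hb1 x.1 x.2).2⟩)
    let P : ↥(SVerts k h s l) → ℕ := fun x =>
      x.1.2.1 - Lrow l x.1.1.1 - obk (blk (x.1.2.1 - Lrow l x.1.1.1))
    let LEN : Fin (2*k) × Fin (2*k) → ℕ := fun u => fibLen u.2.1
    have hF1 : ∀ x, (F x).1.1 = x.1.1.1 - s := fun _ => rfl
    have hF2 : ∀ x, (F x).2.1 = blk (x.1.2.1 - Lrow l x.1.1.1) := fun _ => rfl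
    have hPdef : ∀ x, P x =
        x.1.2.1 - Lrow l x.1.1.1 - obk (blk (x.1.2.1 - Lrow l x.1.1.1)) := fun _ => rfl
    have hLEN : ∀ u, LEN u = fibLen u.2.1 := fun _ => rfl
    have hFeq : ∀ (x : ↥(SVerts k h s l)) (u : Fin (2*k) × Fin (2*k)),
        (F x).1.1 = u.1.1 → (F x).2.1 = u.2.1 → F x = u := by
      intro x u h1 h2
      exact Prod.ext (Fin.ext h1) (Fin.ext h2)
    have hobk16 : ∀ b : ℕ, b + 1 ≤ 2*k → obk b + fibLen b ≤ 16*k := by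
      intro b hb
      have h1 := obk_add b
      have h2 := obk_le (b+1) (2*k) hb
      have h3 : obk (2*k) = 16*k := by unfold obk; omega
      omega
    -- generic vertex construction
    have hmk : ∀ (a b : Fin (2*k)) (t : ℕ), t < fibLen b.1 →
        ∃ x : ↥(SVerts k h s l), F x = (a, b) ∧ P x = t ∧
          x.1.1.1 = s + a.1 ∧ x.1.2.1 = Lrow l (s + a.1) + obk b.1 + t := by
      intro a b t ht
      have ha := a.isLt
      have hbb := b.isLt
      have hobk : obk b.1 + t < 16*k := by
        have := hobk16 b.1 (by omega)
        omega
      have hiv : s + a.1 < h := by omega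
      have hjv : Lrow l (s + a.1) + obk b.1 + t < 4*h := by unfold Lrow; omega
      have hmem : ((⟨s + a.1, hiv⟩ : Fin h),
          (⟨Lrow l (s + a.1) + obk b.1 + t, hjv⟩ : Fin (4*h))) ∈ SVerts k h s l := by
        refine (hmem_iff _).mpr ⟨?_, ?_, ?_, ?_⟩
        · show s ≤ s + a.1; omega
        · show s + a.1 < s + 2*k; omega
        · show Lrow l (s + a.1) ≤ Lrow l (s + a.1) + obk b.1 + t; omega
        · show Lrow l (s + a.1) + obk b.1 + t < Lrow l (s + a.1) + 16*k; omega
      refine ⟨⟨_, hmem⟩, ?_, ?_, rfl, rfl⟩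
      · apply hFeq
        · rw [hF1]
          show s + a.1 - s = a.1
          omega
        · rw [hF2]
          show blk (Lrow l (s + a.1) + obk b.1 + t - Lrow l (s + a.1)) = b.1
          rw [show Lrow l (s + a.1) + obk b.1 + t - Lrow l (s + a.1) = obk b.1 + t
            from by omega]
          exact blk_obk b.1 t ht
      · rw [hPdef]
        show Lrow l (s + a.1) + obk b.1 + t - Lrow l (s + a.1) -
          obk (blk (Lrow l (s + a.1) + obk b.1 + t - Lrow l (s + a.1))) = t
        rw [show Lrow l (s + a.1) + obk b.1 + t - Lrow l (s + a.1) = obk b.1 + t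
          from by omega, blk_obk b.1 t ht]
        omega
    have hlen_odd : ∀ u, Odd (LEN u) := fun u => fibLen_odd u.2.1
    have hpos_lt : ∀ x, P x < LEN (F x) := fun x => (blk_spec _).2
    have hfull : ∀ u : Fin (2*k) × Fin (2*k), ∀ j < LEN u, ∃ x, F x = u ∧ P x = j := by
      intro u j hj
      obtain ⟨x, hx1, hx2, -, -⟩ := hmk u.1 u.2 j (by rw [hLEN] at hj; exact hj)
      exact ⟨x, by rw [hx1], hx2⟩
    have hinj : ∀ x y, F x = F y → P x = P y → x = y := by
      intro x y hf hp
      obtain ⟨a1, a2, a3, a4⟩ := (hmem_iff _).mp x.2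
      obtain ⟨b1, b2, b3, b4⟩ := (hmem_iff _).mp y.2
      have h1 : (F x).1.1 = (F y).1.1 := by rw [hf]
      have h2 : (F x).2.1 = (F y).2.1 := by rw [hf]
      rw [hF1, hF1] at h1
      rw [hF2, hF2] at h2
      have hival : x.1.1.1 = y.1.1.1 := by omega
      rw [hPdef, hPdef] at hp
      have hsx := blk_spec (x.1.2.1 - Lrow l x.1.1.1)
      have hsy := blk_spec (y.1.2.1 - Lrow l y.1.1.1)
      rw [h2] at hsx hp
      rw [hival] at hsx hp a3 a4
      have hjval : x.1.2.1 = y.1.2.1 := by omega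
      exact Subtype.ext (Prod.ext (Fin.ext hival) (Fin.ext hjval))
    have hgridne : ∀ x y : ↥(SVerts k h s l), (F x).2.1 ≠ (F y).2.1 → F x ≠ F y := by
      intro x y hne hc
      exact hne (by rw [hc])
    have hgridne1 : ∀ x y : ↥(SVerts k h s l), (F x).1.1 ≠ (F y).1.1 → F x ≠ F y := by
      intro x y hne hc
      exact hne (by rw [hc])
    have hH : ∀ x y : ↥(SVerts k h s l), SAdjH k h s l x.1 y.1 →
        (F x = F y ∧ (P x + 1 = P y ∨ P y + 1 = P x)) ∨
        (F x ≠ F y ∧ P x % 2 = 0 ∧ P y % 2 = 0 ∧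
          (gridGraph (2*k) (2*k)).Adj (F x) (F y)) := by
      intro x y hadj
      obtain ⟨hx, hy, hieq, hjeq⟩ := hadj
      obtain ⟨a1, a2, a3, a4⟩ := (hmem_iff _).mp hx
      obtain ⟨b1, b2, b3, b4⟩ := (hmem_iff _).mp hy
      have hival : x.1.1.1 = y.1.1.1 := by rw [hieq]
      have hyoff : y.1.2.1 - Lrow l y.1.1.1 = (x.1.2.1 - Lrow l x.1.1.1) + 1 := by
        rw [← hival]
        omega
      rcases blk_step (x.1.2.1 - Lrow l x.1.1.1) with ⟨hb, hpstep⟩ | ⟨hb, hlast, hstart⟩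
      · left
        constructor
        · apply hFeq
          · rw [hF1, hF1]; omega
          · rw [hF2, hF2, hyoff]
            exact hb.symm
        · left
          rw [hPdef, hPdef, hyoff, hb]
          omega
      · right
        have hne : F x ≠ F y := by
          apply hgridne
          rw [hF2, hF2, hyoff, hb]
          omega
        have hblt : blk (x.1.2.1 - Lrow l x.1.1.1) + 1 < 2*k := by
          have hj16 : (x.1.2.1 - Lrow l x.1.1.1) + 1 < 16*k := by omega
          have := blk_lt k _ hj16
          omega
        refine ⟨hne, ?_, ?_, ?_⟩
        · rw [hPdef, hlast]
          have := fibLen_odd (blk (x.1.2.1 - Lrow l x.1.1.1))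
          rw [Nat.odd_iff] at this
          have h9 : 1 ≤ fibLen (blk (x.1.2.1 - Lrow l x.1.1.1)) := by omega
          omega
        · rw [hPdef, hyoff, hb]
          omega
        · rw [gridGraph, SimpleGraph.fromRel_adj]
          refine ⟨hne, Or.inl (Or.inl ⟨?_, ?_⟩)⟩
          · exact Fin.ext (by rw [hF1, hF1]; omega)
          · rw [hF2, hF2, hyoff, hb]
    have hV : ∀ x y : ↥(SVerts k h s l), SAdjV k h s l x.1 y.1 →
        (F x = F y ∧ (P x + 1 = P y ∨ P y + 1 = P x)) ∨
        (F x ≠ F y ∧ P x % 2 = 0 ∧ P y % 2 = 0 ∧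
          (gridGraph (2*k) (2*k)).Adj (F x) (F y)) := by
      intro x y hadj
      obtain ⟨hx, hy, b, hblt, hia, hcx, hcy⟩ := hadj
      obtain ⟨pc, pd, hpc2, hpd2, hpcl, hpdl, hc1, hc2⟩ := conn_spec l x.1.1.1 b
      obtain ⟨a1, a2, a3, a4⟩ := (hmem_iff _).mp hx
      obtain ⟨b1, b2, b3, b4⟩ := (hmem_iff _).mp hy
      have hxoff : x.1.2.1 - Lrow l x.1.1.1 = obk b + pc := by
        rw [hcx, hc1]; omega
      have hyoff : y.1.2.1 - Lrow l y.1.1.1 = obk b + pd := by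
        have hLy : Lrow l y.1.1.1 = Lrow l (x.1.1.1 + 1) := by rw [hia]
        rw [hcy, hc2, hLy]
        omega
      have hbx : blk (x.1.2.1 - Lrow l x.1.1.1) = b := by
        rw [hxoff]; exact blk_obk b pc hpcl
      have hby : blk (y.1.2.1 - Lrow l y.1.1.1) = b := by
        rw [hyoff]; exact blk_obk b pd hpdl
      right
      have hne : F x ≠ F y := by
        apply hgridne1
        rw [hF1, hF1]
        omega
      refine ⟨hne, ?_, ?_, ?_⟩
      · rw [hPdef, hbx, hxoff]
        omega
      · rw [hPdef, hby, hyoff]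
        omega
      · rw [gridGraph, SimpleGraph.fromRel_adj]
        refine ⟨hne, Or.inl (Or.inr ⟨?_, ?_⟩)⟩
        · exact Fin.ext (by rw [hF2, hF2, hbx, hby])
        · rw [hF1, hF1]
          omega
    have hkey : ∀ x y : ↥(SVerts k h s l),
        (⟨SVerts k h s l, SAdj k h s l, fun {v w} hvw => hadj_sub v w hvw,
          fun {v w} hvw => hedge_vert v w hvw, ⟨fun _ _ hab => hsymm hab⟩⟩ :
            (cylindricalMatchingGrid h).Subgraph).coe.Adj x y →
        (F x = F y ∧ (P x + 1 = P y ∨ P y + 1 = P x)) ∨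
        (F x ≠ F y ∧ P x % 2 = 0 ∧ P y % 2 = 0 ∧
          (gridGraph (2*k) (2*k)).Adj (F x) (F y)) := by
      intro x y hadj
      replace hadj : SAdj k h s l x.1 y.1 := hadj
      rcases hadj with hh' | hh' | hh' | hh'
      · exact hH x y hh'
      · rcases hH y x hh' with ⟨h1, h2⟩ | ⟨h1, h2, h3, h4⟩
        · exact Or.inl ⟨h1.symm, h2.symm⟩
        · exact Or.inr ⟨fun hc => h1 hc.symm, h3, h2, h4.symm⟩
      · exact hV x y hh'
      · rcases hV y x hh' with ⟨h1, h2⟩ | ⟨h1, h2, h3, h4⟩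
        · exact Or.inl ⟨h1.symm, h2.symm⟩
        · exact Or.inr ⟨fun hc => h1 hc.symm, h3, h2, h4.symm⟩
    have hadj_of : ∀ x y : ↥(SVerts k h s l), F x = F y → P x + 1 = P y →
        SAdj k h s l x.1 y.1 := by
      intro x y hf hp
      obtain ⟨a1, a2, a3, a4⟩ := (hmem_iff _).mp x.2
      obtain ⟨b1, b2, b3, b4⟩ := (hmem_iff _).mp y.2
      have h1 : (F x).1.1 = (F y).1.1 := by rw [hf]
      have h2 : (F x).2.1 = (F y).2.1 := by rw [hf]
      rw [hF1, hF1] at h1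
      rw [hF2, hF2] at h2
      have hival : x.1.1.1 = y.1.1.1 := by omega
      rw [hPdef, hPdef] at hp
      have hsx := blk_spec (x.1.2.1 - Lrow l x.1.1.1)
      have hsy := blk_spec (y.1.2.1 - Lrow l y.1.1.1)
      rw [h2] at hsx hp
      rw [hival] at hsx hp a3 a4
      have hjval : y.1.2.1 = x.1.2.1 + 1 := by omega
      exact Or.inl ⟨x.2, y.2, Fin.ext hival, by omega⟩
    have hhor : ∀ u w : Fin (2*k) × Fin (2*k), u.1 = w.1 → u.2.1 + 1 = w.2.1 →
        ∃ x y : ↥(SVerts k h s l), F x = u ∧ F y = w ∧ SAdj k h s l x.1 y.1 := by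
      intro u w hfst hsnd
      have hfl : 1 ≤ fibLen u.2.1 := by unfold fibLen; split_ifs <;> omega
      obtain ⟨x, hx1, -, hx3, hx4⟩ := hmk u.1 u.2 (fibLen u.2.1 - 1) (by omega)
      obtain ⟨y, hy1, -, hy3, hy4⟩ := hmk w.1 w.2 0 (by unfold fibLen; split_ifs <;> omega)
      refine ⟨x, y, by rw [hx1], by rw [hy1], Or.inl ⟨x.2, y.2, ?_, ?_⟩⟩
      · exact Fin.ext (by rw [hx3, hy3, hfst])
      · rw [hx4, hy4, ← hfst]
        have := obk_add u.2.1
        rw [← hsnd]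
        omega
    have hver : ∀ u w : Fin (2*k) × Fin (2*k), u.2 = w.2 → u.1.1 + 1 = w.1.1 →
        ∃ x y : ↥(SVerts k h s l), F x = u ∧ F y = w ∧ SAdj k h s l x.1 y.1 := by
      intro u w hsnd hfst
      obtain ⟨pc, pd, hpc2, hpd2, hpcl, hpdl, hc1, hc2⟩ := conn_spec l (s + u.1.1) u.2.1
      have ha := u.1.isLt
      have ha' := w.1.isLt
      have hbb := u.2.isLt
      have hobkf := hobk16 u.2.1 (by omega)
      have hiv : s + u.1.1 < h := by omega
      have hiv' : s + u.1.1 + 1 < h := by omega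
      have hLb : Lrow l (s + u.1.1) ≤ 2*l + 1 ∧ 2*l ≤ Lrow l (s + u.1.1) := by
        unfold Lrow; omega
      have hLb' : Lrow l (s + u.1.1 + 1) ≤ 2*l + 1 ∧ 2*l ≤ Lrow l (s + u.1.1 + 1) := by
        unfold Lrow; omega
      have hjc : (connc l (s + u.1.1) u.2.1).1 < 4*h := by rw [hc1]; omega
      have hjd : (connc l (s + u.1.1) u.2.1).2 < 4*h := by
        rw [hc2]
        omega
      have hmemx : ((⟨s + u.1.1, hiv⟩ : Fin h),
          (⟨(connc l (s + u.1.1) u.2.1).1, hjc⟩ : Fin (4*h))) ∈ SVerts k h s l := by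
        refine (hmem_iff _).mpr ⟨?_, ?_, ?_, ?_⟩
        · show s ≤ s + u.1.1; omega
        · show s + u.1.1 < s + 2*k; omega
        · show Lrow l (s + u.1.1) ≤ (connc l (s + u.1.1) u.2.1).1
          rw [hc1]; omega
        · show (connc l (s + u.1.1) u.2.1).1 < Lrow l (s + u.1.1) + 16*k
          rw [hc1]; omega
      have hmemy : ((⟨s + u.1.1 + 1, hiv'⟩ : Fin h),
          (⟨(connc l (s + u.1.1) u.2.1).2, hjd⟩ : Fin (4*h))) ∈ SVerts k h s l := by
        refine (hmem_iff _).mpr ⟨?_, ?_, ?_, ?_⟩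
        · show s ≤ s + u.1.1 + 1; omega
        · show s + u.1.1 + 1 < s + 2*k; omega
        · show Lrow l (s + u.1.1 + 1) ≤ (connc l (s + u.1.1) u.2.1).2
          rw [hc2]; omega
        · show (connc l (s + u.1.1) u.2.1).2 < Lrow l (s + u.1.1 + 1) + 16*k
          rw [hc2]; omega
      refine ⟨⟨_, hmemx⟩, ⟨_, hmemy⟩, ?_, ?_, Or.inr (Or.inr (Or.inl
        ⟨hmemx, hmemy, u.2.1, by omega, ?_, ?_, ?_⟩))⟩
      · apply hFeq
        · rw [hF1]
          show s + u.1.1 - s = u.1.1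
          omega
        · rw [hF2]
          show blk ((connc l (s + u.1.1) u.2.1).1 - Lrow l (s + u.1.1)) = u.2.1
          rw [hc1, show Lrow l (s + u.1.1) + obk u.2.1 + pc - Lrow l (s + u.1.1) =
            obk u.2.1 + pc from by omega]
          exact blk_obk u.2.1 pc hpcl
      · apply hFeq
        · rw [hF1]
          show s + u.1.1 + 1 - s = w.1.1
          omega
        · rw [hF2]
          show blk ((connc l (s + u.1.1) u.2.1).2 - Lrow l (s + u.1.1 + 1)) = w.2.1
          rw [hc2, show Lrow l (s + u.1.1 + 1) + obk u.2.1 + pd - Lrow l (s + u.1.1 + 1) =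
            obk u.2.1 + pd from by omega, blk_obk u.2.1 pd hpdl, hsnd]
      · show s + u.1.1 + 1 = s + u.1.1 + 1
        rfl
      · rfl
      · rfl
    have hcross : ∀ u w : Fin (2*k) × Fin (2*k), (gridGraph (2*k) (2*k)).Adj u w →
        ∃ x y : ↥(SVerts k h s l), F x = u ∧ F y = w ∧ SAdj k h s l x.1 y.1 := by
      intro u w huw
      rw [gridGraph, SimpleGraph.fromRel_adj] at huw
      obtain ⟨hne, hrel⟩ := huw
      rcases hrel with (⟨hfst, hsnd⟩ | ⟨hsnd, hfst⟩) | (⟨hfst, hsnd⟩ | ⟨hsnd, hfst⟩)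
      · exact hhor u w hfst hsnd
      · exact hver u w hsnd hfst
      · obtain ⟨x, y, hx, hy, hadj⟩ := hhor w u hfst hsnd
        exact ⟨y, x, hy, hx, hsymm hadj⟩
      · obtain ⟨x, y, hx, hy, hadj⟩ := hver w u hsnd hfst
        exact ⟨y, x, hy, hx, hsymm hadj⟩
    obtain ⟨K, hK1, hK2⟩ := linModel_bicontract (gridGraph (2*k) (2*k))
      (∑ u : Fin (2*k) × Fin (2*k), (LEN u - 1))
      (⟨SVerts k h s l, SAdj k h s l, fun {v w} hvw => hadj_sub v w hvw,
        fun {v w} hvw => hedge_vert v w hvw, ⟨fun _ _ hab => hsymm hab⟩⟩ :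
          (cylindricalMatchingGrid h).Subgraph).coe
      ⟨F, LEN, P, hlen_odd, hpos_lt, hfull, hinj, hkey,
        fun x y hf hp => hadj_of x y hf hp,
        fun u w huw => by
          obtain ⟨x, y, hx, hy, hadj⟩ := hcross u w huw
          exact ⟨x, y, hx, hy, hadj⟩⟩ rfl
    exact ⟨K, hK1, hK2⟩

end PaperMM
end
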